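/- arXiv:2307.12661 — 6 statements merged into one kernel-verified Lean document; each statement's English description precedes it below -/
import Mathlib

section
/- Suppose the feasible set F of the semi-infinite program has nonempty interior. Suppose (y₁*, …, y_M*) ∈ N^M attains the supremum of Φ over N^M, and λ* ∈ F(y₁*, …, y_M*) minimizes ψ over F(y₁*, …, y_M*). Then the function V : ℝⁿ → ℝ defined by V(z) = Σ_{i=1}^M λ*_i φ_i(z) satisfies V(0) = 0, V(y) > 0 for every y ∈ N \ {0}, and ⟨∇V(y), f(y)⟩ ≤ 0 for every y ∈ N; consequently the origin is Lyapunov stable for the system ẋ = f(x). -/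
/-- A function `α : [0,∞) → [0,∞)` is of class K if it is continuous,
strictly increasing, and `α 0 = 0`. -/
def IsClassK (α : ℝ → ℝ) : Prop :=
  ContinuousOn α (Set.Ici 0) ∧ StrictMonoOn α (Set.Ici 0) ∧ α 0 = 0 ∧
    ∀ x ∈ Set.Ici (0 : ℝ), 0 ≤ α x

/-- The origin is Lyapunov stable for `ẋ = f(x)`. -/
def LyapunovStable (n : ℕ) (f : EuclideanSpace ℝ (Fin n) → EuclideanSpace ℝ (Fin n)) : Prop :=
  ∀ ε > (0 : ℝ), ∃ δ > (0 : ℝ), ∀ x : ℝ → EuclideanSpace ℝ (Fin n),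
    (∀ t, 0 ≤ t → HasDerivAt x (f (x t)) t) → ‖x 0‖ < δ →
      ∀ t, 0 ≤ t → ‖x t‖ < ε

/-!
Each point `y` cuts out a closed convex set `C y` of coefficient vectors. Any `M + 1` of the sets
`{ψ ≤ ψ λ*}` and `C y` (`y ∈ N`), truncated to a large ball, have a common point: a point of `F` if
the sublevel set is not among them, and otherwise a minimiser of `ψ` over the `M`-point relaxation,
whose value is at most `Φ(y*) = ψ λ*`. By Helly's theorem in `ℝ^M` all of them meet, and a common
point is a minimiser of the strictly convex `ψ` over `F(y*)`, hence equals `λ*`; so `λ* ∈ F` and `V`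
is a Lyapunov function on `N`. Stability is the first-exit argument: a trajectory starting where `V`
is below its minimum on a small sphere can never reach that sphere.
-/

open Set Filter Topology Metric Module
open scoped Finset

theorem IsMinOn.csInf_image_eq {α : Type*} {f : α → ℝ} {s : Set α} {a : α} (h : IsMinOn f s a)
    (ha : a ∈ s) : sInf (f '' s) = f a :=
  IsLeast.csInf_eq ⟨mem_image_of_mem f ha, forall_mem_image.2 h⟩

theorem isCompact_setOf_le_of_tendsto_cocompact {X : Type*} [TopologicalSpace X]
    {f : X → ℝ} (hf : Continuous f) (hfc : Tendsto f (cocompact X) atTop) (c : ℝ) :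
    IsCompact {x | f x ≤ c} := by
  obtain ⟨K, hK, hKc⟩ := mem_cocompact.1 (hfc.eventually_gt_atTop c)
  refine hK.of_isClosed_subset (isClosed_le hf continuous_const) fun x hx => ?_
  by_contra hxK
  exact (show c < f x from hKc hxK).not_ge hx

theorem IsClosed.exists_isMinOn_of_tendsto_cocompact {X : Type*} [TopologicalSpace X]
    {f : X → ℝ} {s : Set X} (hs : IsClosed s) (hne : s.Nonempty) (hf : Continuous f)
    (hfc : Tendsto f (cocompact X) atTop) : ∃ x ∈ s, IsMinOn f s x := by
  obtain ⟨x₀, hx₀⟩ := hne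
  exact hf.continuousOn.exists_isMinOn' hs hx₀
    ((hfc.eventually_ge_atTop (f x₀)).filter_mono inf_le_left)

theorem Finset.exists_subset_range_of_card_le {α : Type*} (s : Finset α) {d : ℕ} (hs : #s ≤ d)
    (g : Fin d → α) : ∃ ys : Fin d → α, ↑s ⊆ Set.range ys := by
  refine ⟨fun k => if h : (k : ℕ) < #s then s.equivFin.symm ⟨k, h⟩ else g k, fun a ha => ?_⟩
  exact ⟨Fin.castLE hs (s.equivFin ⟨a, ha⟩), by simp⟩

theorem mem_biInter_of_relaxations_le {E ι : Type*} [NormedAddCommGroup E] [NormedSpace ℝ E]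
    [FiniteDimensional ℝ E] {ψ : E → ℝ} {C : ι → Set E} {S : Set ι} {d : ℕ}
    (hd : finrank ℝ E ≤ d) (hψ : Continuous ψ) (hψconv : StrictConvexOn ℝ univ ψ)
    (hψcoer : Tendsto ψ (cocompact E) atTop) (hC : ∀ i, IsClosed (C i))
    (hCconv : ∀ i, Convex ℝ (C i)) (hne : (⋂ i ∈ S, C i).Nonempty)
    {ystar : Fin d → ι} (hystar : ∀ k, ystar k ∈ S) {lstar : E}
    (hlstar : lstar ∈ ⋂ k, C (ystar k)) (hmin : IsMinOn ψ (⋂ k, C (ystar k)) lstar)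
    (hrelax : ∀ ys : Fin d → ι, (∀ k, ys k ∈ S) → ∃ μ ∈ ⋂ k, C (ys k), ψ μ ≤ ψ lstar) :
    lstar ∈ ⋂ i ∈ S, C i := by
  obtain ⟨lbar, hlbar⟩ := hne
  set L := {l | ψ l ≤ ψ lstar}
  have hL : IsCompact L := isCompact_setOf_le_of_tendsto_cocompact hψ hψcoer _
  obtain ⟨R, hR⟩ := (hL.isBounded.insert lbar).subset_closedBall 0
  -- The sublevel set `L` takes one of the `d + 1` slots of Helly's theorem, leaving a `d`-point
  -- relaxation.
  let K : Option S → Set E := fun o => o.elim L fun i => C i ∩ closedBall 0 R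
  obtain ⟨μ, hμ⟩ : (⋂ o, K o).Nonempty := by
    refine Convex.helly_theorem_compact' (𝕜 := ℝ) ?_ ?_ fun I hI => ?_
    · rintro (_ | i)
      exacts [show Convex ℝ L by simpa using hψconv.convexOn.convex_le (ψ lstar),
        (hCconv i).inter (convex_closedBall 0 R)]
    · rintro (_ | i)
      exacts [hL, (isCompact_closedBall 0 R).inter_left (hC i)]
    by_cases hI0 : none ∈ I
    · obtain ⟨ys, hys⟩ := I.eraseNone.exists_subset_range_of_card_le
        (by rw [Finset.card_eraseNone_of_mem hI0]; omega) fun k => ⟨ystar k, hystar k⟩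
      obtain ⟨μ, hμC, hμψ⟩ := hrelax (fun k => ys k) fun k => (ys k).2
      refine ⟨μ, mem_iInter₂.2 ?_⟩
      rintro (_ | i) hi
      · exact hμψ
      · obtain ⟨k, rfl⟩ := hys (Finset.mem_eraseNone.2 hi)
        exact ⟨mem_iInter.1 hμC k, hR (mem_insert_of_mem _ hμψ)⟩
    · refine ⟨lbar, mem_iInter₂.2 ?_⟩
      rintro (_ | i) hi
      · exact absurd hi hI0
      · exact ⟨mem_iInter₂.1 hlbar i i.2, hR (mem_insert _ _)⟩
  have hμC : μ ∈ ⋂ i ∈ S, C i := mem_iInter₂.2 fun i hi => (mem_iInter.1 hμ (some ⟨i, hi⟩)).1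
  have hμψ : ψ μ ≤ ψ lstar := mem_iInter.1 hμ none
  have hμstar : μ ∈ ⋂ k, C (ystar k) := mem_iInter.2 fun k => mem_iInter₂.1 hμC _ (hystar k)
  have hμeq : μ = lstar :=
    (hψconv.subset (subset_univ _) (convex_iInter fun k => hCconv _)).eq_of_isMinOn
      (fun l hl => hμψ.trans (hmin hl)) hmin hμstar hlstar
  exact hμeq ▸ hμC

theorem tendsto_cocompact_atTop_of_forall_le {E : Type*} [NormedAddCommGroup E] [ProperSpace E]
    {f : E → ℝ} (hf : ∀ c : ℝ, ∃ R : ℝ, ∀ x, R ≤ ‖x‖ → c ≤ f x) :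
    Tendsto f (cocompact E) atTop :=
  tendsto_atTop.2 fun c =>
    let ⟨R, hR⟩ := hf c
    (tendsto_norm_cocompact_atTop.eventually_ge_atTop R).mono hR

theorem fderiv_sum_mul_apply {E ι : Type*} [NormedAddCommGroup E] [NormedSpace ℝ E] [Fintype ι]
    {φ : ι → E → ℝ} (c : ι → ℝ) {y : E} (hφ : ∀ i, DifferentiableAt ℝ (φ i) y) (v : E) :
    fderiv ℝ (fun z => ∑ i, c i * φ i z) y v = ∑ i, c i * fderiv ℝ (φ i) y v := by
  simp [fderiv_fun_sum, fderiv_const_mul, hφ]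

theorem norm_lt_of_lyapunov_barrier {E : Type*} [NormedAddCommGroup E] [NormedSpace ℝ E]
    {f : E → E} {V : E → ℝ} {r : ℝ} (hV : Differentiable ℝ V)
    (hdec : ∀ y ∈ closedBall (0 : E) r, fderiv ℝ V y (f y) ≤ 0)
    {x : ℝ → E} (hx : ∀ t, 0 ≤ t → HasDerivAt x (f (x t)) t) (hx0 : ‖x 0‖ < r)
    (hbarrier : ∀ y ∈ sphere (0 : E) r, V (x 0) < V y) {t : ℝ} (ht : 0 ≤ t) : ‖x t‖ < r := by
  by_contra! hxt
  have hcont : ContinuousOn x (Ici 0) := fun s hs => (hx s hs).continuousAt.continuousWithinAt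
  set exits := Ici 0 ∩ (fun s => ‖x s‖) ⁻¹' Ici r
  have hexits : IsClosed exits := hcont.norm.preimage_isClosed_of_isClosed isClosed_Ici isClosed_Ici
  have hbdd : BddBelow exits := ⟨0, fun s hs => hs.1⟩
  set T := sInf exits
  have hT : T ∈ exits := hexits.csInf_mem ⟨t, ht, hxt⟩ hbdd
  have hbefore : ∀ s ∈ Ico 0 T, ‖x s‖ < r := fun s hs =>
    lt_of_not_ge fun h => hs.2.not_ge (csInf_le hbdd ⟨hs.1, h⟩)
  have hT0 : 0 < T := hT.1.lt_of_ne fun h => (h ▸ hT.2 : r ≤ ‖x 0‖).not_gt hx0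
  have hxT : ‖x T‖ = r := by
    refine le_antisymm (le_of_tendsto ((hx T hT.1).continuousAt.norm.tendsto.mono_left
      (nhdsWithin_le_nhds (s := Iio T))) ?_) hT.2
    filter_upwards [Ioo_mem_nhdsLT hT0] with s hs using (hbefore s (Ioo_subset_Ico_self hs)).le
  have hball : ∀ s ∈ Icc 0 T, x s ∈ closedBall 0 r := by
    intro s hs
    rw [mem_closedBall_zero_iff]
    rcases hs.2.lt_or_eq with hsT | rfl
    exacts [(hbefore s ⟨hs.1, hsT⟩).le, hxT.le]
  have hderiv : ∀ s ∈ Icc 0 T, HasDerivAt (V ∘ x) (fderiv ℝ V (x s) (f (x s))) s := fun s hs =>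
    (hV (x s)).hasFDerivAt.comp_hasDerivAt s (hx s hs.1)
  have hanti : AntitoneOn (V ∘ x) (Icc 0 T) :=
    antitoneOn_of_hasDerivWithinAt_nonpos (convex_Icc 0 T)
      (fun s hs => (hderiv s hs).continuousAt.continuousWithinAt)
      (fun s hs => (hderiv s (interior_subset hs)).hasDerivWithinAt)
      fun s hs => hdec _ (hball s (interior_subset hs))
  exact (hbarrier (x T) (mem_sphere_zero_iff_norm.2 hxT)).not_ge
    (hanti ⟨le_rfl, hT.1⟩ ⟨hT.1, le_rfl⟩ hT.1)

theorem lyapunovStable_of_lyapunovFunction {n : ℕ}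
    {f : EuclideanSpace ℝ (Fin n) → EuclideanSpace ℝ (Fin n)} {N : Set (EuclideanSpace ℝ (Fin n))}
    (hN : N ∈ 𝓝 0) {V : EuclideanSpace ℝ (Fin n) → ℝ} (hV : Differentiable ℝ V) (hV0 : V 0 = 0)
    (hpos : ∀ y ∈ N, y ≠ 0 → 0 < V y) (hdec : ∀ y ∈ N, fderiv ℝ V y (f y) ≤ 0) :
    LyapunovStable n f := by
  intro ε hε
  obtain ⟨ρ, hρ, hρN⟩ := nhds_basis_closedBall.mem_iff.1 hN
  set r := min ρ ε
  have hr : 0 < r := lt_min hρ hε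
  have hrN : closedBall 0 r ⊆ N := (closedBall_subset_closedBall (min_le_left _ _)).trans hρN
  have hnear : ∀ᶠ y in 𝓝 0, ∀ z ∈ sphere 0 r, V y < V z := by
    refine (isCompact_sphere 0 r).eventually_forall_of_forall_eventually fun z hz => ?_
    have hz0 : z ≠ 0 := ne_of_mem_sphere hz hr.ne'
    exact (hV.continuous.comp continuous_fst).continuousAt.eventually_lt
      (hV.continuous.comp continuous_snd).continuousAt
      (by simpa [hV0] using hpos z (hrN (sphere_subset_closedBall hz)) hz0)
  obtain ⟨δ, hδ, hδV⟩ := Metric.eventually_nhds_iff.1 hnear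
  refine ⟨min δ r, lt_min hδ hr, fun x hx hx0 t ht => ?_⟩
  have hxt : ‖x t‖ < r := norm_lt_of_lyapunov_barrier hV (fun y hy => hdec y (hrN hy)) hx
    (hx0.trans_le (min_le_right _ _))
    (hδV (by simpa using hx0.trans_le (min_le_left _ _))) ht
  exact hxt.trans_le (min_le_right _ _)

section LinearConstraints

variable {E : Type*} [NormedAddCommGroup E] [NormedSpace ℝ E] {M : ℕ}

def lyapunovConstraints (α β : ℝ → ℝ) (f : E → E) (φ : Fin M → E → ℝ) (y : E) :
    Set (EuclideanSpace ℝ (Fin M)) :=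
  {l | α ‖y‖ ≤ ∑ i, l i * φ i y ∧ (∑ i, l i * φ i y) ≤ β ‖y‖ ∧
    (∑ i, l i * fderiv ℝ (φ i) y (f y)) ≤ 0}

theorem isLinearMap_sum_mul {ι : Type*} [Fintype ι] (c : ι → ℝ) :
    IsLinearMap ℝ fun l : EuclideanSpace ℝ ι => ∑ i, l i * c i :=
  ⟨fun l l' => by simp [add_mul, Finset.sum_add_distrib],
    fun a l => by simp [Finset.mul_sum, mul_assoc]⟩

theorem isClosed_lyapunovConstraints (α β : ℝ → ℝ) (f : E → E) (φ : Fin M → E → ℝ) (y : E) :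
    IsClosed (lyapunovConstraints α β f φ y) := by
  rw [lyapunovConstraints, ofPred_and, ofPred_and]
  exact (isClosed_le continuous_const (by fun_prop)).inter
      ((isClosed_le (by fun_prop) continuous_const).inter
        (isClosed_le (by fun_prop) continuous_const))

theorem convex_lyapunovConstraints (α β : ℝ → ℝ) (f : E → E) (φ : Fin M → E → ℝ) (y : E) :
    Convex ℝ (lyapunovConstraints α β f φ y) :=
  (convex_halfSpace_ge (isLinearMap_sum_mul _) _).inter
    ((convex_halfSpace_le (isLinearMap_sum_mul _) _).inter
      (convex_halfSpace_le (isLinearMap_sum_mul _) _))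

end LinearConstraints

theorem stmt_0_general
    (n M : ℕ)
    (f : EuclideanSpace ℝ (Fin n) → EuclideanSpace ℝ (Fin n))
    (N : Set (EuclideanSpace ℝ (Fin n)))
    (hNnbd : N ∈ nhds (0 : EuclideanSpace ℝ (Fin n)))
    (α β : ℝ → ℝ) (hα : IsClassK α)
    (φ : Fin M → EuclideanSpace ℝ (Fin n) → ℝ)
    (hφ : ∀ i, ContDiff ℝ 1 (φ i)) (hφ0 : ∀ i, φ i 0 = 0)
    (ψ : EuclideanSpace ℝ (Fin M) → ℝ)
    (hψcont : Continuous ψ)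
    (hψstrict : StrictConvexOn ℝ Set.univ ψ)
    (hψcoercive : ∀ C : ℝ, ∃ R : ℝ, ∀ l, R ≤ ‖l‖ → C ≤ ψ l)
    -- the feasible set of the semi-infinite program
    (F : Set (EuclideanSpace ℝ (Fin M)))
    (hF : F = {l | ∀ y ∈ N,
      α ‖y‖ ≤ ∑ i, l i * φ i y ∧ (∑ i, l i * φ i y) ≤ β ‖y‖ ∧
      (∑ i, l i * fderiv ℝ (φ i) y (f y)) ≤ 0})
    (hFint : (interior F).Nonempty)
    -- the relaxed feasible sets
    (Fpt : (Fin M → EuclideanSpace ℝ (Fin n)) → Set (EuclideanSpace ℝ (Fin M)))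
    (hFpt : ∀ ys, Fpt ys = {l | ∀ k : Fin M,
      α ‖ys k‖ ≤ ∑ i, l i * φ i (ys k) ∧ (∑ i, l i * φ i (ys k)) ≤ β ‖ys k‖ ∧
      (∑ i, l i * fderiv ℝ (φ i) (ys k) (f (ys k))) ≤ 0})
    -- the relaxed value map Φ
    (Φ : (Fin M → EuclideanSpace ℝ (Fin n)) → ℝ)
    (hΦ : ∀ ys, Φ ys = sInf (ψ '' Fpt ys))
    -- (y₁*, …, y_M*) attains the supremum of Φ over N^M
    (ystar : Fin M → EuclideanSpace ℝ (Fin n)) (hystarN : ∀ k, ystar k ∈ N)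
    (hystarmax : ∀ ys : Fin M → EuclideanSpace ℝ (Fin n), (∀ k, ys k ∈ N) → Φ ys ≤ Φ ystar)
    -- λ* minimizes ψ over F(y₁*, …, y_M*)
    (lstar : EuclideanSpace ℝ (Fin M))
    (hlstarFeas : lstar ∈ Fpt ystar)
    (hlstarMin : ∀ l ∈ Fpt ystar, ψ lstar ≤ ψ l)
    -- the function V
    (V : EuclideanSpace ℝ (Fin n) → ℝ)
    (hV : ∀ z, V z = ∑ i, lstar i * φ i z) :
    V 0 = 0 ∧
    (∀ y ∈ N, y ≠ 0 → 0 < V y) ∧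
    (∀ y ∈ N, fderiv ℝ V y (f y) ≤ 0) ∧
    LyapunovStable n f := by
  subst hF
  have hVeq : V = fun z => ∑ i, lstar i * φ i z := funext hV
  subst hVeq
  set C := lyapunovConstraints α β f φ
  have hFpt' : ∀ ys, Fpt ys = ⋂ k, C (ys k) := fun ys => by
    rw [hFpt]; ext; simp [C, lyapunovConstraints]
  have hψcoer := tendsto_cocompact_atTop_of_forall_le hψcoercive
  obtain ⟨lbar, hlbar⟩ : (⋂ y ∈ N, C y).Nonempty := by
    obtain ⟨lbar, hlbar⟩ := hFint
    exact ⟨lbar, by simpa [C, lyapunovConstraints] using interior_subset hlbar⟩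
  have hfeas : lstar ∈ ⋂ y ∈ N, C y := by
    rw [hFpt'] at hlstarFeas hlstarMin
    refine mem_biInter_of_relaxations_le finrank_euclideanSpace_fin.le hψcont hψstrict hψcoer
      (isClosed_lyapunovConstraints α β f φ) (convex_lyapunovConstraints α β f φ) ⟨lbar, hlbar⟩
      hystarN hlstarFeas hlstarMin fun ys hys => ?_
    obtain ⟨μ, hμ, hμmin⟩ := (isClosed_iInter fun k => isClosed_lyapunovConstraints α β f φ (ys k))
      |>.exists_isMinOn_of_tendsto_cocompact
        ⟨lbar, mem_iInter.2 fun k => mem_iInter₂.1 hlbar _ (hys k)⟩ hψcont hψcoer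
    refine ⟨μ, hμ, ?_⟩
    have := hystarmax ys hys
    rwa [hΦ, hΦ, hFpt', hFpt', hμmin.csInf_image_eq hμ,
      IsMinOn.csInf_image_eq hlstarMin hlstarFeas] at this
  have hlstarC : ∀ y ∈ N, lstar ∈ C y := mem_iInter₂.1 hfeas
  have hdiff : ∀ i, Differentiable ℝ (φ i) := fun i => (hφ i).differentiable one_ne_zero
  have hV0 : ∑ i, lstar i * φ i 0 = 0 := by simp [hφ0]
  have hpos : ∀ y ∈ N, y ≠ 0 → 0 < ∑ i, lstar i * φ i y := fun y hy hy0 =>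
    (hα.2.2.1 ▸ hα.2.1 self_mem_Ici (norm_nonneg y) (norm_pos_iff.2 hy0)).trans_le (hlstarC y hy).1
  have hdec : ∀ y ∈ N, fderiv ℝ (fun z => ∑ i, lstar i * φ i z) y (f y) ≤ 0 := fun y hy => by
    rw [fderiv_sum_mul_apply _ fun i => hdiff i y]
    exact (hlstarC y hy).2.2
  exact ⟨hV0, hpos, hdec, lyapunovStable_of_lyapunovFunction hNnbd
    (Differentiable.fun_sum fun i _ => (hdiff i).const_mul _) hV0 hpos hdec⟩

theorem stmt_0
    (n M : ℕ) (hn : 1 ≤ n) (hM : 1 ≤ M)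
    (f : EuclideanSpace ℝ (Fin n) → EuclideanSpace ℝ (Fin n))
    (hfLip : ∃ K : NNReal, LipschitzWith K f) (hf0 : f 0 = 0)
    (N : Set (EuclideanSpace ℝ (Fin n))) (hNcpt : IsCompact N)
    (hNnbd : N ∈ nhds (0 : EuclideanSpace ℝ (Fin n)))
    (α β : ℝ → ℝ) (hα : IsClassK α) (hβ : IsClassK β)
    (φ : Fin M → EuclideanSpace ℝ (Fin n) → ℝ)
    (hφ : ∀ i, ContDiff ℝ 1 (φ i)) (hφ0 : ∀ i, φ i 0 = 0)
    (ψ : EuclideanSpace ℝ (Fin M) → ℝ)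
    (hψcont : Continuous ψ) (hψnonneg : ∀ l, 0 ≤ ψ l)
    (hψstrict : StrictConvexOn ℝ Set.univ ψ)
    (hψcoercive : ∀ C : ℝ, ∃ R : ℝ, ∀ l, R ≤ ‖l‖ → C ≤ ψ l)
    -- the feasible set of the semi-infinite program
    (F : Set (EuclideanSpace ℝ (Fin M)))
    (hF : F = {l | ∀ y ∈ N,
      α ‖y‖ ≤ ∑ i, l i * φ i y ∧ (∑ i, l i * φ i y) ≤ β ‖y‖ ∧
      (∑ i, l i * fderiv ℝ (φ i) y (f y)) ≤ 0})
    (hFint : (interior F).Nonempty)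
    -- the relaxed feasible sets
    (Fpt : (Fin M → EuclideanSpace ℝ (Fin n)) → Set (EuclideanSpace ℝ (Fin M)))
    (hFpt : ∀ ys, Fpt ys = {l | ∀ k : Fin M,
      α ‖ys k‖ ≤ ∑ i, l i * φ i (ys k) ∧ (∑ i, l i * φ i (ys k)) ≤ β ‖ys k‖ ∧
      (∑ i, l i * fderiv ℝ (φ i) (ys k) (f (ys k))) ≤ 0})
    -- the relaxed value map Φ
    (Φ : (Fin M → EuclideanSpace ℝ (Fin n)) → ℝ)
    (hΦ : ∀ ys, Φ ys = sInf (ψ '' Fpt ys))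
    -- (y₁*, …, y_M*) attains the supremum of Φ over N^M
    (ystar : Fin M → EuclideanSpace ℝ (Fin n)) (hystarN : ∀ k, ystar k ∈ N)
    (hystarmax : ∀ ys : Fin M → EuclideanSpace ℝ (Fin n), (∀ k, ys k ∈ N) → Φ ys ≤ Φ ystar)
    -- λ* minimizes ψ over F(y₁*, …, y_M*)
    (lstar : EuclideanSpace ℝ (Fin M))
    (hlstarFeas : lstar ∈ Fpt ystar)
    (hlstarMin : ∀ l ∈ Fpt ystar, ψ lstar ≤ ψ l)
    -- the function V
    (V : EuclideanSpace ℝ (Fin n) → ℝ)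
    (hV : ∀ z, V z = ∑ i, lstar i * φ i z) :
    V 0 = 0 ∧
    (∀ y ∈ N, y ≠ 0 → 0 < V y) ∧
    (∀ y ∈ N, fderiv ℝ V y (f y) ≤ 0) ∧
    LyapunovStable n f :=
  stmt_0_general n M f N hNnbd α β hα φ hφ hφ0 ψ hψcont hψstrict hψcoercive F hF hFint Fpt hFpt Φ hΦ
    ystar hystarN hystarmax lstar hlstarFeas hlstarMin V hV
end

section
/- Suppose the feasible set F of the semi-infinite program has nonempty interior. Suppose (y₁*, …, y_M*) ∈ N^M attains the supremum of Φ over N^M, and λ* ∈ F(y₁*, …, y_M*) minimizes ψ over F(y₁*, …, y_M*). Then λ* is feasible for the full semi-infinite program, i.e., λ* ∈ F: for every y ∈ N one has α(‖y‖) ≤ Σ_{i=1}^M λ*_i φ_i(y) ≤ β(‖y‖) and Σ_{i=1}^M λ*_i ⟨∇φ_i(y), f(y)⟩ ≤ 0; moreover λ* minimizes ψ over F. -/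
open Finset

noncomputable def linF {M : ℕ} (v : Fin M → ℝ) : EuclideanSpace ℝ (Fin M) →ₗ[ℝ] ℝ where
  toFun l := ∑ i, l i * v i
  map_add' x y := by
    simp [PiLp.add_apply, add_mul, Finset.sum_add_distrib]
  map_smul' t x := by
    simp [PiLp.smul_apply, smul_eq_mul, Finset.mul_sum, mul_assoc]

@[simp] lemma linF_apply {M : ℕ} (v : Fin M → ℝ) (l : EuclideanSpace ℝ (Fin M)) :
    linF v l = ∑ i, l i * v i := rfl

lemma keyFinset {M : ℕ} {ι : Type*} [Fintype ι] [DecidableEq ι]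
    (ψ : EuclideanSpace ℝ (Fin M) → ℝ) (hψ : ConvexOn ℝ Set.univ ψ)
    (v : ι → Fin M → ℝ) (c : ι → ℝ)
    (z : EuclideanSpace ℝ (Fin M))
    (hz : ∀ j, linF (v j) z ≤ c j)
    (hmin : ∀ l, (∀ j, linF (v j) l ≤ c j) → ψ z ≤ ψ l) :
    ∃ T : Finset ι, T.card ≤ M ∧ ∀ l, (∀ j ∈ T, linF (v j) l ≤ c j) → ψ z ≤ ψ l := by
  classical
  set P : Finset ι → Prop := fun T => ∀ l, (∀ j ∈ T, linF (v j) l ≤ c j) → ψ z ≤ ψ l with hP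
  set S : Finset ι := Finset.univ.filter fun j => linF (v j) z = c j with hS
  -- Claim 1 : P S
  have hPS : P S := by
    intro l hl
    rcases isEmpty_or_nonempty ι with hι | hι
    · exact hmin l fun j => isEmptyElim j
    by_contra hcon
    rw [not_le] at hcon
    set tc : ι → ℝ := fun j =>
      if linF (v j) z = c j then 1
      else (c j - linF (v j) z) / (|linF (v j) l - linF (v j) z| + 1) with htc
    have htcpos : ∀ j, 0 < tc j := by
      intro j
      rw [htc]
      dsimp only
      split_ifs with h
      · norm_num
      · apply div_pos
        · exact sub_pos.mpr (lt_of_le_of_ne (hz j) h)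
        · positivity
    set t0 : ℝ := Finset.univ.inf' Finset.univ_nonempty tc with ht0
    have ht0pos : 0 < t0 := by
      rw [ht0, Finset.lt_inf'_iff]
      exact fun j _ => htcpos j
    set t : ℝ := min t0 1 with ht
    have htpos : 0 < t := lt_min ht0pos one_pos
    have ht1 : t ≤ 1 := min_le_right _ _
    set zt : EuclideanSpace ℝ (Fin M) := z + t • (l - z) with hzt
    have hlin : ∀ j, linF (v j) zt
        = linF (v j) z + t * (linF (v j) l - linF (v j) z) := by
      intro j
      simp only [hzt, map_add, map_smul, map_sub, smul_eq_mul]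
    have hsat : ∀ j, linF (v j) zt ≤ c j := by
      intro j
      rw [hlin j]
      by_cases ha : linF (v j) z = c j
      · have hDj : linF (v j) l ≤ c j := hl j (Finset.mem_filter.mpr ⟨Finset.mem_univ j, ha⟩)
        nlinarith
      · have httc : t ≤ tc j := le_trans (min_le_left _ _) (Finset.inf'_le tc (Finset.mem_univ j))
        have htcj : tc j = (c j - linF (v j) z) / (|linF (v j) l - linF (v j) z| + 1) := by
          rw [htc]; simp only []; rw [if_neg ha]
        have habs : 0 < |linF (v j) l - linF (v j) z| + 1 := by positivity
        have h2 : t * (|linF (v j) l - linF (v j) z| + 1) ≤ c j - linF (v j) z := by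
          rw [htcj] at httc
          calc t * (|linF (v j) l - linF (v j) z| + 1)
              ≤ ((c j - linF (v j) z) / (|linF (v j) l - linF (v j) z| + 1))
                * (|linF (v j) l - linF (v j) z| + 1) :=
                mul_le_mul_of_nonneg_right httc habs.le
            _ = c j - linF (v j) z := div_mul_cancel₀ _ habs.ne'
        have h3 : t * (linF (v j) l - linF (v j) z) ≤ t * |linF (v j) l - linF (v j) z| :=
          mul_le_mul_of_nonneg_left (le_abs_self _) htpos.le
        nlinarith
    have h4 : ψ z ≤ ψ zt := hmin zt hsat
    have h5 : zt = (1 - t) • z + t • l := by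
      rw [hzt]
      rw [sub_smul, one_smul, smul_sub]
      abel
    have h6 : ψ zt ≤ (1 - t) * ψ z + t * ψ l := by
      rw [h5]
      exact hψ.2 (Set.mem_univ z) (Set.mem_univ l) (by linarith) htpos.le (by ring)
    nlinarith
  -- minimal T
  have hGood : S.card ∈ {m : ℕ | ∃ T : Finset ι, T ⊆ S ∧ P T ∧ T.card = m} :=
    ⟨S, Finset.Subset.refl S, hPS, rfl⟩
  obtain ⟨T, hTS, hTP, hTcard⟩ := Nat.sInf_mem (Set.nonempty_of_mem hGood)
  have hminimal : ∀ T' : Finset ι, T' ⊆ S → P T' → T.card ≤ T'.card := by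
    intro T' h1 h2
    rw [hTcard]
    exact Nat.sInf_le ⟨T', h1, h2, rfl⟩
  refine ⟨T, ?_, hTP⟩
  by_contra hMc
  rw [not_le] at hMc
  -- each constraint essential
  have hnotP : ∀ j ∈ T, ¬ P (T.erase j) := by
    intro j hj hP'
    have := hminimal (T.erase j) ((Finset.erase_subset j T).trans hTS) hP'
    have hcc := Finset.card_erase_of_mem hj
    omega
  have hExists : ∀ j : ι, ∃ wj : EuclideanSpace ℝ (Fin M),
      j ∈ T → ((∀ i ∈ T.erase j, linF (v i) wj ≤ c i) ∧ ψ wj < ψ z) := by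
    intro j
    by_cases hj : j ∈ T
    · have h : ¬ ∀ l, (∀ i ∈ T.erase j, linF (v i) l ≤ c i) → ψ z ≤ ψ l := hnotP j hj
      push_neg at h
      obtain ⟨wj, h1, h2⟩ := h
      exact ⟨wj, fun _ => ⟨h1, h2⟩⟩
    · exact ⟨z, fun h => absurd h hj⟩
  choose w hw using hExists
  have hdiag : ∀ j ∈ T, c j < linF (v j) (w j) := by
    intro j hj
    by_contra h
    rw [not_lt] at h
    refine absurd (hTP (w j) ?_) (not_le.mpr (hw j hj).2)
    intro i hi
    by_cases hij : i = j
    · subst hij; exact h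
    · exact (hw j hj).1 i (Finset.mem_erase.mpr ⟨hij, hi⟩)
  have hact : ∀ j ∈ T, linF (v j) z = c j := fun j hj => (Finset.mem_filter.mp (hTS hj)).2
  -- linear dependence
  have hnli : ¬ LinearIndependent ℝ (fun j : {x // x ∈ T} => w j.1 - z) := by
    intro hli
    have h1 := hli.fintype_card_le_finrank
    rw [Fintype.card_coe, finrank_euclideanSpace_fin] at h1
    omega
  rw [Fintype.not_linearIndependent_iff] at hnli
  obtain ⟨s, hsum, j0, hj0⟩ : ∃ s : {x // x ∈ T} → ℝ,
      (∑ j, s j • (w j.1 - z) = 0) ∧ ∃ j0, 0 < s j0 := by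
    obtain ⟨s, hsum, j0, hj0⟩ := hnli
    rcases hj0.lt_or_gt with h | h
    · refine ⟨-s, ?_, j0, by simpa using h⟩
      simp only [Pi.neg_apply, neg_smul]
      rw [Finset.sum_neg_distrib, hsum, neg_zero]
    · exact ⟨s, hsum, j0, h⟩
  set θ : {x // x ∈ T} → ℝ := fun j => max (s j) 0 with hθ
  have hθnn : ∀ j, 0 ≤ θ j := fun j => le_max_right _ _
  set σ : ℝ := ∑ j, θ j with hσdef
  have hσpos : 0 < σ := by
    rw [hσdef]
    refine Finset.sum_pos' (fun j _ => hθnn j) ⟨j0, Finset.mem_univ j0, ?_⟩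
    rw [hθ]; simp [max_eq_left hj0.le, hj0]
  set wstar : EuclideanSpace ℝ (Fin M) := σ⁻¹ • ∑ j, θ j • w j.1 with hwstar
  -- constraints hold at wstar
  have hsat : ∀ i ∈ T, linF (v i) wstar ≤ c i := by
    intro i hi
    have hGsum : linF (v i) wstar = σ⁻¹ * ∑ j, θ j * linF (v i) (w j.1) := by
      rw [hwstar, map_smul, map_sum]
      simp [smul_eq_mul]
    have haj : ∀ j : {x // x ∈ T}, j.1 ≠ i → linF (v i) (w j.1) - c i ≤ 0 := by
      intro j hji
      have h1 := (hw j.1 j.2).1 i (Finset.mem_erase.mpr ⟨fun h => hji h.symm, hi⟩)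
      linarith
    have hkey : ∑ j, θ j * (linF (v i) (w j.1) - c i) ≤ 0 := by
      have hG0 : ∑ j, s j * (linF (v i) (w j.1) - c i) = 0 := by
        have h2 := congrArg (linF (v i)) hsum
        rw [map_sum, map_zero] at h2
        have h3 : ∀ j : {x // x ∈ T},
            linF (v i) (s j • (w j.1 - z)) = s j * (linF (v i) (w j.1) - c i) := by
          intro j
          rw [map_smul, map_sub, hact i hi]
          simp [smul_eq_mul]
        rw [← h2]
        exact Finset.sum_congr rfl fun j _ => (h3 j).symm
      by_cases hsi : s ⟨i, hi⟩ ≤ 0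
      · apply Finset.sum_nonpos
        intro j _
        by_cases hji : j = ⟨i, hi⟩
        · subst hji
          have : θ (⟨i, hi⟩ : {x // x ∈ T}) = 0 := by rw [hθ]; simpa using hsi
          rw [this, zero_mul]
        · have hji' : j.1 ≠ i := fun h => hji (Subtype.ext h)
          exact mul_nonpos_of_nonneg_of_nonpos (hθnn j) (haj j hji')
      · rw [not_le] at hsi
        have hsplit : ∑ j, θ j * (linF (v i) (w j.1) - c i)
            = (∑ j, s j * (linF (v i) (w j.1) - c i))
              + ∑ j, (θ j - s j) * (linF (v i) (w j.1) - c i) := by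
          rw [← Finset.sum_add_distrib]
          exact Finset.sum_congr rfl fun j _ => by ring
        rw [hsplit, hG0, zero_add]
        apply Finset.sum_nonpos
        intro j _
        by_cases hsj : 0 ≤ s j
        · have : θ j - s j = 0 := by rw [hθ]; simp [max_eq_left hsj]
          rw [this, zero_mul]
        · rw [not_le] at hsj
          have hθj : θ j = 0 := by rw [hθ]; simp [le_of_lt hsj]
          have hji : j ≠ ⟨i, hi⟩ := fun h => by rw [h] at hsj; linarith
          have hji' : j.1 ≠ i := fun h => hji (Subtype.ext h)
          have := haj j hji'
          nlinarith
    rw [hGsum]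
    have h5 : ∑ j, θ j * linF (v i) (w j.1) ≤ σ * c i := by
      have : ∑ j, θ j * linF (v i) (w j.1)
          = (∑ j, θ j * (linF (v i) (w j.1) - c i)) + σ * c i := by
        rw [hσdef, Finset.sum_mul, ← Finset.sum_add_distrib]
        exact Finset.sum_congr rfl fun j _ => by ring
      linarith
    calc σ⁻¹ * ∑ j, θ j * linF (v i) (w j.1) ≤ σ⁻¹ * (σ * c i) :=
          mul_le_mul_of_nonneg_left h5 (inv_nonneg.mpr hσpos.le)
      _ = c i := by field_simp
  -- ψ wstar < ψ z
  have hψlt : ψ wstar < ψ z := by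
    have hw2 : wstar = ∑ j, (σ⁻¹ * θ j) • w j.1 := by
      rw [hwstar, Finset.smul_sum]
      exact Finset.sum_congr rfl fun j _ => by rw [smul_smul]
    have hcoef : ∑ j, σ⁻¹ * θ j = 1 := by
      rw [← Finset.mul_sum, ← hσdef, inv_mul_cancel₀ hσpos.ne']
    have hjen : ψ wstar ≤ ∑ j, (σ⁻¹ * θ j) * ψ (w j.1) := by
      rw [hw2]
      exact hψ.map_sum_le (fun j _ => mul_nonneg (inv_nonneg.mpr hσpos.le) (hθnn j)) hcoef
        (fun j _ => Set.mem_univ _)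
    have hlt : ∑ j, (σ⁻¹ * θ j) * ψ (w j.1) < ∑ j, (σ⁻¹ * θ j) * ψ z := by
      apply Finset.sum_lt_sum
      · intro j _
        exact mul_le_mul_of_nonneg_left ((hw j.1 j.2).2.le)
          (mul_nonneg (inv_nonneg.mpr hσpos.le) (hθnn j))
      · refine ⟨j0, Finset.mem_univ j0, ?_⟩
        apply mul_lt_mul_of_pos_left (hw j0.1 j0.2).2
        apply mul_pos (inv_pos.mpr hσpos)
        rw [hθ]; simpa [max_eq_left hj0.le] using hj0
    have : ∑ j, (σ⁻¹ * θ j) * ψ z = ψ z := by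
      rw [← Finset.sum_mul, hcoef, one_mul]
    linarith
  exact absurd (hTP wstar hsat) (not_le.mpr hψlt)

lemma existsMinOnClosed {M : ℕ} (ψ : EuclideanSpace ℝ (Fin M) → ℝ) (hc : Continuous ψ)
    (hcoer : ∀ C : ℝ, ∃ R : ℝ, ∀ l, R ≤ ‖l‖ → C ≤ ψ l)
    (Q : Set (EuclideanSpace ℝ (Fin M))) (hQc : IsClosed Q) (hQn : Q.Nonempty) :
    ∃ z ∈ Q, ∀ l ∈ Q, ψ z ≤ ψ l := by
  obtain ⟨q0, hq0⟩ := hQn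
  obtain ⟨R, hR⟩ := hcoer (ψ q0)
  set R' : ℝ := max R ‖q0‖ with hR'
  have hq0K : q0 ∈ Q ∩ Metric.closedBall 0 R' := by
    refine ⟨hq0, ?_⟩
    rw [Metric.mem_closedBall, dist_zero_right]
    exact le_max_right _ _
  have hK : IsCompact (Q ∩ Metric.closedBall 0 R') :=
    (isCompact_closedBall (0 : EuclideanSpace ℝ (Fin M)) R').inter_left hQc
  obtain ⟨z, hz, hzmin⟩ := hK.exists_isMinOn ⟨q0, hq0K⟩ hc.continuousOn
  refine ⟨z, hz.1, fun l hl => ?_⟩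
  by_cases h : ‖l‖ ≤ R'
  · exact hzmin ⟨hl, by rwa [Metric.mem_closedBall, dist_zero_right]⟩
  · have h1 : ψ q0 ≤ ψ l := hR l (le_trans (le_max_left _ _) (le_of_not_ge h))
    have h2 : ψ z ≤ ψ q0 := hzmin hq0K
    linarith


theorem stmt_1
    (n M : ℕ) (hn : 1 ≤ n) (hM : 1 ≤ M)
    (f : EuclideanSpace ℝ (Fin n) → EuclideanSpace ℝ (Fin n))
    (hfLip : ∃ K : NNReal, LipschitzWith K f) (hf0 : f 0 = 0)
    (N : Set (EuclideanSpace ℝ (Fin n))) (hNcpt : IsCompact N)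
    (hNnbd : N ∈ nhds (0 : EuclideanSpace ℝ (Fin n)))
    (α β : ℝ → ℝ) (hα : IsClassK α) (hβ : IsClassK β)
    (φ : Fin M → EuclideanSpace ℝ (Fin n) → ℝ)
    (hφ : ∀ i, ContDiff ℝ 1 (φ i)) (hφ0 : ∀ i, φ i 0 = 0)
    (ψ : EuclideanSpace ℝ (Fin M) → ℝ)
    (hψcont : Continuous ψ) (hψnonneg : ∀ l, 0 ≤ ψ l)
    (hψstrict : StrictConvexOn ℝ Set.univ ψ)
    (hψcoercive : ∀ C : ℝ, ∃ R : ℝ, ∀ l, R ≤ ‖l‖ → C ≤ ψ l)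
    -- the feasible set of the semi-infinite program
    (F : Set (EuclideanSpace ℝ (Fin M)))
    (hF : F = {l | ∀ y ∈ N,
      α ‖y‖ ≤ ∑ i, l i * φ i y ∧ (∑ i, l i * φ i y) ≤ β ‖y‖ ∧
      (∑ i, l i * fderiv ℝ (φ i) y (f y)) ≤ 0})
    (hFint : (interior F).Nonempty)
    -- the relaxed feasible sets
    (Fpt : (Fin M → EuclideanSpace ℝ (Fin n)) → Set (EuclideanSpace ℝ (Fin M)))
    (hFpt : ∀ ys, Fpt ys = {l | ∀ k : Fin M,
      α ‖ys k‖ ≤ ∑ i, l i * φ i (ys k) ∧ (∑ i, l i * φ i (ys k)) ≤ β ‖ys k‖ ∧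
      (∑ i, l i * fderiv ℝ (φ i) (ys k) (f (ys k))) ≤ 0})
    -- the relaxed value map Φ
    (Φ : (Fin M → EuclideanSpace ℝ (Fin n)) → ℝ)
    (hΦ : ∀ ys, Φ ys = sInf (ψ '' Fpt ys))
    -- (y₁*, …, y_M*) attains the supremum of Φ over N^M
    (ystar : Fin M → EuclideanSpace ℝ (Fin n)) (hystarN : ∀ k, ystar k ∈ N)
    (hystarmax : ∀ ys : Fin M → EuclideanSpace ℝ (Fin n), (∀ k, ys k ∈ N) → Φ ys ≤ Φ ystar)
    -- λ* minimizes ψ over F(y₁*, …, y_M*)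
    (lstar : EuclideanSpace ℝ (Fin M))
    (hlstarFeas : lstar ∈ Fpt ystar)
    (hlstarMin : ∀ l ∈ Fpt ystar, ψ lstar ≤ ψ l)    :
    lstar ∈ F ∧ (∀ l ∈ F, ψ lstar ≤ ψ l) := by
  classical
  obtain ⟨lhat, hlhatInt⟩ := hFint
  have hlhatF : lhat ∈ F := interior_subset hlhatInt
  have hFsub : ∀ ys : Fin M → EuclideanSpace ℝ (Fin n), (∀ k, ys k ∈ N) → F ⊆ Fpt ys := by
    intro ys hys l hl
    rw [hFpt]
    intro k
    rw [hF] at hl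
    exact hl (ys k) (hys k)
  have hmain : lstar ∈ F := by
    by_contra hcon
    rw [hF, Set.mem_setOf_eq] at hcon
    push_neg at hcon
    obtain ⟨y', hy'N, hy'viol⟩ := hcon
    -- the M+1 relevant points
    set pts : (Fin M ⊕ Unit) → EuclideanSpace ℝ (Fin n) := Sum.elim ystar (fun _ => y')
      with hpts
    have hptsN : ∀ p, pts p ∈ N := by
      rintro (k | u)
      · exact hystarN k
      · exact hy'N
    -- constraint data
    set vv : ((Fin M ⊕ Unit) × Fin 3) → Fin M → ℝ := fun j i =>
      ![-(φ i (pts j.1)), φ i (pts j.1), fderiv ℝ (φ i) (pts j.1) (f (pts j.1))] j.2 with hvv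
    set cc : ((Fin M ⊕ Unit) × Fin 3) → ℝ := fun j =>
      ![-(α ‖pts j.1‖), β ‖pts j.1‖, 0] j.2 with hcc
    have hbridge : ∀ (p : Fin M ⊕ Unit) (l : EuclideanSpace ℝ (Fin M)),
        (∀ r : Fin 3, linF (vv (p, r)) l ≤ cc (p, r)) ↔
        (α ‖pts p‖ ≤ ∑ i, l i * φ i (pts p) ∧ (∑ i, l i * φ i (pts p)) ≤ β ‖pts p‖ ∧
         (∑ i, l i * fderiv ℝ (φ i) (pts p) (f (pts p))) ≤ 0) := by
      intro p l
      have h0 : linF (vv (p, 0)) l = -∑ i, l i * φ i (pts p) := by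
        simp [hvv, mul_neg, Finset.sum_neg_distrib]
      have h1 : linF (vv (p, 1)) l = ∑ i, l i * φ i (pts p) := by
        simp [hvv]
      have h2 : linF (vv (p, 2)) l = ∑ i, l i * fderiv ℝ (φ i) (pts p) (f (pts p)) := by
        simp [hvv]
      have c0 : cc (p, 0) = -(α ‖pts p‖) := by simp [hcc]
      have c1 : cc (p, 1) = β ‖pts p‖ := by simp [hcc]
      have c2 : cc (p, 2) = 0 := by simp [hcc]
      constructor
      · intro h
        have ha := h 0
        have hb := h 1
        have hc := h 2
        rw [h0, c0] at ha
        rw [h1, c1] at hb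
        rw [h2, c2] at hc
        exact ⟨by linarith, hb, hc⟩
      · rintro ⟨hA, hB, hC⟩ r
        fin_cases r
        · exact (by rw [h0, c0]; linarith : linF (vv (p, (0 : Fin 3))) l ≤ cc (p, (0 : Fin 3)))
        · exact (by rw [h1, c1]; exact hB : linF (vv (p, (1 : Fin 3))) l ≤ cc (p, (1 : Fin 3)))
        · exact (by rw [h2, c2]; exact hC : linF (vv (p, (2 : Fin 3))) l ≤ cc (p, (2 : Fin 3)))
    -- the polyhedron of all constraints at the M+1 points
    set Q : Set (EuclideanSpace ℝ (Fin M)) :=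
      {l | ∀ j : (Fin M ⊕ Unit) × Fin 3, linF (vv j) l ≤ cc j} with hQ
    have hQclosed : IsClosed Q := by
      have : Q = ⋂ j : (Fin M ⊕ Unit) × Fin 3, {l | linF (vv j) l ≤ cc j} := by
        ext l
        simp [hQ, Set.mem_iInter]
      rw [this]
      exact isClosed_iInter fun j =>
        isClosed_le (linF (vv j)).continuous_of_finiteDimensional continuous_const
    have hFQ : ∀ l ∈ F, l ∈ Q := by
      intro l hl j
      have h3 : α ‖pts j.1‖ ≤ ∑ i, l i * φ i (pts j.1) ∧
          (∑ i, l i * φ i (pts j.1)) ≤ β ‖pts j.1‖ ∧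
          (∑ i, l i * fderiv ℝ (φ i) (pts j.1) (f (pts j.1))) ≤ 0 := by
        rw [hF] at hl
        exact hl (pts j.1) (hptsN j.1)
      have := ((hbridge j.1 l).mpr h3) j.2
      simpa using this
    obtain ⟨z, hzQ, hzmin⟩ := existsMinOnClosed ψ hψcont hψcoercive Q hQclosed
      ⟨lhat, hFQ lhat hlhatF⟩
    obtain ⟨T, hTcard, hTkey⟩ := keyFinset ψ hψstrict.convexOn vv cc z
      (fun j => hzQ j) (fun l hl => hzmin l hl)
    -- the points used by T
    set Tp : Finset (Fin M ⊕ Unit) := T.image Prod.fst with hTp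
    have hTpcard : Tp.card ≤ M := le_trans Finset.card_image_le hTcard
    set lp : List (Fin M ⊕ Unit) := Tp.toList with hlp
    have hlplen : lp.length ≤ M := by
      rw [hlp, Finset.length_toList]
      exact hTpcard
    set ys' : Fin M → EuclideanSpace ℝ (Fin n) := fun k =>
      if h : (k : ℕ) < lp.length then pts (lp.get ⟨k, h⟩) else y' with hys'
    have hys'N : ∀ k, ys' k ∈ N := by
      intro k
      rw [hys']
      dsimp only
      split_ifs with h
      · exact hptsN _
      · exact hy'N
    have hcover : ∀ p ∈ Tp, ∃ k : Fin M, ys' k = pts p := by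
      intro p hp
      have hmem : p ∈ lp := by
        rw [hlp]
        exact Finset.mem_toList.mpr hp
      obtain ⟨i, hi⟩ := List.mem_iff_get.mp hmem
      refine ⟨⟨i.1, lt_of_lt_of_le i.2 hlplen⟩, ?_⟩
      rw [hys']
      dsimp only
      rw [dif_pos i.2]
      rw [← hi]
    have hFpt' : ∀ l ∈ Fpt ys', ∀ j ∈ T, linF (vv j) l ≤ cc j := by
      intro l hl j hj
      have hp : j.1 ∈ Tp := Finset.mem_image_of_mem Prod.fst hj
      obtain ⟨k, hk⟩ := hcover j.1 hp
      rw [hFpt] at hl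
      have h3 := hl k
      rw [hk] at h3
      have := ((hbridge j.1 l).mpr h3) j.2
      simpa using this
    have hΦystar : Φ ystar = ψ lstar := by
      rw [hΦ]
      refine IsLeast.csInf_eq ⟨⟨lstar, hlstarFeas, rfl⟩, ?_⟩
      rintro x ⟨l, hl, rfl⟩
      exact hlstarMin l hl
    have hzlow : ψ z ≤ Φ ys' := by
      rw [hΦ]
      refine le_csInf ⟨ψ lhat, lhat, hFsub ys' hys'N hlhatF, rfl⟩ ?_
      rintro b ⟨l, hl, rfl⟩
      exact hTkey l (hFpt' l hl)
    have hup : Φ ys' ≤ ψ lstar := hΦystar ▸ hystarmax ys' hys'N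
    have hzFpt : z ∈ Fpt ystar := by
      rw [hFpt]
      intro k
      have := (hbridge (Sum.inl k) z).mp (fun r => hzQ (Sum.inl k, r))
      simpa [hpts] using this
    have hlow2 : ψ lstar ≤ ψ z := hlstarMin z hzFpt
    have heq : ψ z = ψ lstar := le_antisymm (hzlow.trans hup) hlow2
    have hzy' : α ‖y'‖ ≤ ∑ i, z i * φ i y' ∧ (∑ i, z i * φ i y') ≤ β ‖y'‖ ∧
        (∑ i, z i * fderiv ℝ (φ i) y' (f y')) ≤ 0 := by
      have := (hbridge (Sum.inr ()) z).mp (fun r => hzQ (Sum.inr (), r))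
      simpa [hpts] using this
    have hzne : z ≠ lstar := by
      intro h
      rw [h] at hzy'
      exact absurd hzy'.2.2 (not_le.mpr (hy'viol hzy'.1 hzy'.2.1))
    -- midpoint contradiction
    have hmid : ((1:ℝ)/2) • z + ((1:ℝ)/2) • lstar ∈ Fpt ystar := by
      rw [hFpt] at hzFpt hlstarFeas ⊢
      intro k
      obtain ⟨a1, a2, a3⟩ := hzFpt k
      obtain ⟨b1, b2, b3⟩ := hlstarFeas k
      have hsum : ∀ g : Fin M → ℝ,
          ∑ i, (((1:ℝ)/2) • z + ((1:ℝ)/2) • lstar) i * g i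
          = (1/2) * (∑ i, z i * g i) + (1/2) * (∑ i, lstar i * g i) := by
        intro g
        rw [Finset.mul_sum, Finset.mul_sum, ← Finset.sum_add_distrib]
        refine Finset.sum_congr rfl fun i _ => ?_
        simp [PiLp.add_apply, PiLp.smul_apply, smul_eq_mul]
        ring
      exact ⟨by rw [hsum]; linarith, by rw [hsum]; linarith, by rw [hsum]; linarith⟩
    have hstrict := hψstrict.2 (Set.mem_univ z) (Set.mem_univ lstar) hzne
      (by norm_num : (0:ℝ) < 1/2) (by norm_num : (0:ℝ) < 1/2) (by norm_num)
    have := hlstarMin _ hmid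
    rw [heq] at hstrict
    simp only [smul_eq_mul] at hstrict
    linarith
  exact ⟨hmain, fun l hl => hlstarMin l (hFsub ystar hystarN hl)⟩
end

section
/- Suppose the feasible set G of the asymptotic-stability semi-infinite program has nonempty interior. Suppose (y₁*, …, y_{M+L}*) ∈ N^{M+L} attains the supremum over N^{M+L} of the relaxed value map Φ, and (λ*, c*) ∈ G(y₁*, …, y_{M+L}*) minimizes ψ over G(y₁*, …, y_{M+L}*). Then (λ*, c*) is feasible for the full semi-infinite program, i.e., (λ*, c*) ∈ G: for every y ∈ N one has α(‖y‖) ≤ Σ_{i=1}^M λ*_i φ_i(y) ≤ β(‖y‖), γ(‖y‖) ≤ Σ_{j=1}^L c*_j w_j(y), and Σ_{i=1}^M λ*_i ⟨∇φ_i(y), f(y)⟩ + Σ_{j=1}^L c*_j w_j(y) ≤ 0; moreover (λ*, c*) minimizes ψ over G. -/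
section Aux

open Module

variable {M L : ℕ}

private lemma lin1_aux (a : Fin M → ℝ) :
    IsLinearMap ℝ (fun p : EuclideanSpace ℝ (Fin M) × EuclideanSpace ℝ (Fin L) =>
      ∑ i, p.1 i * a i) := by
  constructor
  · intro x y
    simp [Prod.fst_add, PiLp.add_apply, add_mul, Finset.sum_add_distrib]
  · intro c x
    simp [Prod.smul_fst, PiLp.smul_apply, smul_eq_mul, Finset.mul_sum, mul_assoc]

private lemma cont1_aux (a : Fin M → ℝ) :
    Continuous (fun p : EuclideanSpace ℝ (Fin M) × EuclideanSpace ℝ (Fin L) =>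
      ∑ i, p.1 i * a i) := by
  apply continuous_finset_sum
  intro i _
  exact (((EuclideanSpace.proj i).continuous).comp continuous_fst).mul continuous_const

private lemma lin2_aux (b : Fin L → ℝ) :
    IsLinearMap ℝ (fun p : EuclideanSpace ℝ (Fin M) × EuclideanSpace ℝ (Fin L) =>
      ∑ j, p.2 j * b j) := by
  constructor
  · intro x y
    simp [Prod.snd_add, PiLp.add_apply, add_mul, Finset.sum_add_distrib]
  · intro c x
    simp [Prod.smul_snd, PiLp.smul_apply, smul_eq_mul, Finset.mul_sum, mul_assoc]

private lemma cont2_aux (b : Fin L → ℝ) :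
    Continuous (fun p : EuclideanSpace ℝ (Fin M) × EuclideanSpace ℝ (Fin L) =>
      ∑ j, p.2 j * b j) := by
  apply continuous_finset_sum
  intro j _
  exact (((EuclideanSpace.proj j).continuous).comp continuous_snd).mul continuous_const

private lemma lin4_aux (a' : Fin M → ℝ) (b : Fin L → ℝ) :
    IsLinearMap ℝ (fun p : EuclideanSpace ℝ (Fin M) × EuclideanSpace ℝ (Fin L) =>
      (∑ i, p.1 i * a' i) + ∑ j, p.2 j * b j) := by
  have h1 := lin1_aux (L := L) a'
  have h2 := lin2_aux (M := M) b
  constructor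
  · intro x y
    rw [h1.map_add, h2.map_add]; ring
  · intro c x
    rw [h1.map_smul, h2.map_smul, smul_eq_mul, smul_eq_mul, smul_eq_mul]; ring

/-- The constraint set at a single point is convex and closed. -/
private lemma constraint_convex_closed (a a' : Fin M → ℝ) (b : Fin L → ℝ) (r₁ r₂ r₃ : ℝ) :
    Convex ℝ {p : EuclideanSpace ℝ (Fin M) × EuclideanSpace ℝ (Fin L) |
      r₁ ≤ ∑ i, p.1 i * a i ∧ (∑ i, p.1 i * a i) ≤ r₂ ∧ r₃ ≤ ∑ j, p.2 j * b j ∧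
        (∑ i, p.1 i * a' i) + (∑ j, p.2 j * b j) ≤ 0} ∧
    IsClosed {p : EuclideanSpace ℝ (Fin M) × EuclideanSpace ℝ (Fin L) |
      r₁ ≤ ∑ i, p.1 i * a i ∧ (∑ i, p.1 i * a i) ≤ r₂ ∧ r₃ ≤ ∑ j, p.2 j * b j ∧
        (∑ i, p.1 i * a' i) + (∑ j, p.2 j * b j) ≤ 0} := by
  have hset : {p : EuclideanSpace ℝ (Fin M) × EuclideanSpace ℝ (Fin L) |
      r₁ ≤ ∑ i, p.1 i * a i ∧ (∑ i, p.1 i * a i) ≤ r₂ ∧ r₃ ≤ ∑ j, p.2 j * b j ∧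
        (∑ i, p.1 i * a' i) + (∑ j, p.2 j * b j) ≤ 0}
      = {p : EuclideanSpace ℝ (Fin M) × EuclideanSpace ℝ (Fin L) | r₁ ≤ ∑ i, p.1 i * a i}
        ∩ ({p | (∑ i, p.1 i * a i) ≤ r₂}
        ∩ ({p | r₃ ≤ ∑ j, p.2 j * b j}
        ∩ {p | (∑ i, p.1 i * a' i) + (∑ j, p.2 j * b j) ≤ 0})) := by
    ext p; simp [Set.mem_setOf_eq, and_assoc]
  rw [hset]
  constructor
  · exact (convex_halfSpace_ge (lin1_aux a) r₁).inter
      ((convex_halfSpace_le (lin1_aux a) r₂).inter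
        ((convex_halfSpace_ge (lin2_aux b) r₃).inter
          (convex_halfSpace_le (lin4_aux a' b) 0)))
  · exact (isClosed_le continuous_const (cont1_aux a)).inter
      ((isClosed_le (cont1_aux a) continuous_const).inter
        ((isClosed_le continuous_const (cont2_aux b)).inter
          (isClosed_le ((cont1_aux a').add (cont2_aux b)) continuous_const)))

/-- Existence of a minimizer of a continuous coercive function on a closed nonempty set. -/
private lemma exists_min_on {E : Type*} [NormedAddCommGroup E] [NormedSpace ℝ E]
    [ProperSpace E] (ψ : E → ℝ) (hc : Continuous ψ)
    (hco : ∀ C : ℝ, ∃ R : ℝ, ∀ p : E, R ≤ ‖p‖ → C ≤ ψ p)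
    {S : Set E} (hS : IsClosed S) (hne : S.Nonempty) :
    ∃ q ∈ S, ∀ x ∈ S, ψ q ≤ ψ x := by
  obtain ⟨g₀, hg₀⟩ := hne
  obtain ⟨R, hR⟩ := hco (ψ g₀ + 1)
  set r := max R ‖g₀‖ with hr
  have hK : IsCompact (S ∩ Metric.closedBall 0 r) :=
    (isCompact_closedBall 0 r).inter_left hS
  have hKne : (S ∩ Metric.closedBall 0 r).Nonempty :=
    ⟨g₀, hg₀, by simp [Metric.mem_closedBall, dist_zero_right, hr, le_max_right]⟩
  obtain ⟨q, hq, hqmin⟩ := hK.exists_isMinOn hKne hc.continuousOn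
  refine ⟨q, hq.1, fun x hx => ?_⟩
  by_cases hxr : ‖x‖ ≤ r
  · exact hqmin ⟨hx, by simpa [Metric.mem_closedBall, dist_zero_right] using hxr⟩
  · have h1 : ψ q ≤ ψ g₀ := hqmin ⟨hg₀, by
      simp [Metric.mem_closedBall, dist_zero_right, hr, le_max_right]⟩
    have h2 : ψ g₀ + 1 ≤ ψ x := hR x (le_trans (le_max_left _ _) (le_of_not_ge hxr))
    linarith

/-- Any finset of cardinality at most `d` can be enumerated by `Fin d` (with a default filler). -/
private lemma finset_cover {X : Type*} (J : Finset X) (d : ℕ) (hd : J.card ≤ d) (x₀ : X) :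
    ∃ ys : Fin d → X, (∀ k, ys k ∈ J ∨ ys k = x₀) ∧ ∀ j ∈ J, ∃ k, ys k = j := by
  classical
  set l := J.toList with hl
  refine ⟨fun k => l.getD k x₀, fun k => ?_, fun j hj => ?_⟩
  · by_cases hk : (k : ℕ) < l.length
    · left
      show l.getD (k : ℕ) x₀ ∈ J
      rw [List.getD_eq_getElem l x₀ hk]
      exact Finset.mem_toList.mp (List.getElem_mem hk)
    · right
      show l.getD (k : ℕ) x₀ = x₀
      exact List.getD_eq_default l x₀ (le_of_not_gt hk)
  · have hjl : j ∈ l := Finset.mem_toList.mpr hj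
    obtain ⟨i, hi, hieq⟩ := List.mem_iff_getElem.mp hjl
    have hlen : l.length = J.card := Finset.length_toList J
    have hid : i < d := lt_of_lt_of_le (hlen ▸ hi) hd
    refine ⟨⟨i, hid⟩, ?_⟩
    show l.getD i x₀ = j
    rw [List.getD_eq_getElem l x₀ hi]
    exact hieq

end Aux

theorem stmt_3
    (n M L : ℕ) (hn : 1 ≤ n) (hM : 1 ≤ M) (hL : 1 ≤ L)
    (f : EuclideanSpace ℝ (Fin n) → EuclideanSpace ℝ (Fin n))
    (hfLip : ∃ K : NNReal, LipschitzWith K f) (hf0 : f 0 = 0)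
    (N : Set (EuclideanSpace ℝ (Fin n))) (hNcpt : IsCompact N)
    (hNnbd : N ∈ nhds (0 : EuclideanSpace ℝ (Fin n)))
    (α β γ : ℝ → ℝ) (hα : IsClassK α) (hβ : IsClassK β) (hγ : IsClassK γ)
    (φ : Fin M → EuclideanSpace ℝ (Fin n) → ℝ)
    (hφ : ∀ i, ContDiff ℝ 1 (φ i)) (hφ0 : ∀ i, φ i 0 = 0)
    (w : Fin L → EuclideanSpace ℝ (Fin n) → ℝ)
    (hw : ∀ j, ContDiff ℝ 1 (w j)) (hw0 : ∀ j, w j 0 = 0)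
    (ψ : EuclideanSpace ℝ (Fin M) × EuclideanSpace ℝ (Fin L) → ℝ)
    (hψcont : Continuous ψ) (hψnonneg : ∀ p, 0 ≤ ψ p)
    (hψstrict : StrictConvexOn ℝ Set.univ ψ)
    (hψcoercive : ∀ C : ℝ, ∃ R : ℝ, ∀ p : EuclideanSpace ℝ (Fin M) × EuclideanSpace ℝ (Fin L),
      R ≤ ‖p‖ → C ≤ ψ p)
    -- the feasible set of the asymptotic-stability semi-infinite program
    (G : Set (EuclideanSpace ℝ (Fin M) × EuclideanSpace ℝ (Fin L)))
    (hG : G = {p | ∀ y ∈ N,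
      α ‖y‖ ≤ ∑ i, p.1 i * φ i y ∧ (∑ i, p.1 i * φ i y) ≤ β ‖y‖ ∧
      γ ‖y‖ ≤ ∑ j, p.2 j * w j y ∧
      (∑ i, p.1 i * fderiv ℝ (φ i) y (f y)) + (∑ j, p.2 j * w j y) ≤ 0})
    (hGint : (interior G).Nonempty)
    -- the relaxed feasible sets
    (Gpt : (Fin (M + L) → EuclideanSpace ℝ (Fin n)) →
      Set (EuclideanSpace ℝ (Fin M) × EuclideanSpace ℝ (Fin L)))
    (hGpt : ∀ ys, Gpt ys = {p | ∀ k : Fin (M + L),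
      α ‖ys k‖ ≤ ∑ i, p.1 i * φ i (ys k) ∧ (∑ i, p.1 i * φ i (ys k)) ≤ β ‖ys k‖ ∧
      γ ‖ys k‖ ≤ ∑ j, p.2 j * w j (ys k) ∧
      (∑ i, p.1 i * fderiv ℝ (φ i) (ys k) (f (ys k))) + (∑ j, p.2 j * w j (ys k)) ≤ 0})
    -- the relaxed value map Φ
    (Φ : (Fin (M + L) → EuclideanSpace ℝ (Fin n)) → ℝ)
    (hΦ : ∀ ys, Φ ys = sInf (ψ '' Gpt ys))
    -- (y₁*, …, y_{M+L}*) attains the supremum of Φ over N^{M+L}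
    (ystar : Fin (M + L) → EuclideanSpace ℝ (Fin n)) (hystarN : ∀ k, ystar k ∈ N)
    (hystarmax : ∀ ys : Fin (M + L) → EuclideanSpace ℝ (Fin n),
      (∀ k, ys k ∈ N) → Φ ys ≤ Φ ystar)
    -- (λ*, c*) minimizes ψ over G(y₁*, …, y_{M+L}*)
    (lstar : EuclideanSpace ℝ (Fin M)) (cstar : EuclideanSpace ℝ (Fin L))
    (hpstarFeas : (lstar, cstar) ∈ Gpt ystar)
    (hpstarMin : ∀ p ∈ Gpt ystar, ψ (lstar, cstar) ≤ ψ p)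
    :
    (lstar, cstar) ∈ G ∧ (∀ p ∈ G, ψ (lstar, cstar) ≤ ψ p) := by
  classical
  obtain ⟨g₀, hg₀G⟩ : G.Nonempty := ⟨hGint.some, interior_subset hGint.some_mem⟩
  set v := ψ (lstar, cstar) with hv
  set Cset : EuclideanSpace ℝ (Fin n) →
      Set (EuclideanSpace ℝ (Fin M) × EuclideanSpace ℝ (Fin L)) :=
    fun y => {p | α ‖y‖ ≤ ∑ i, p.1 i * φ i y ∧ (∑ i, p.1 i * φ i y) ≤ β ‖y‖ ∧
      γ ‖y‖ ≤ ∑ j, p.2 j * w j y ∧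
      (∑ i, p.1 i * fderiv ℝ (φ i) y (f y)) + (∑ j, p.2 j * w j y) ≤ 0} with hCset
  have hGiff : ∀ p, p ∈ G ↔ ∀ y ∈ N, p ∈ Cset y := by
    intro p; rw [hG]; exact Iff.rfl
  have hGptiff : ∀ ys p, p ∈ Gpt ys ↔ ∀ k, p ∈ Cset (ys k) := by
    intro ys p; rw [hGpt]; exact Iff.rfl
  have hCconv : ∀ y, Convex ℝ (Cset y) := fun y =>
    (constraint_convex_closed (fun i => φ i y) (fun i => fderiv ℝ (φ i) y (f y))
      (fun j => w j y) (α ‖y‖) (β ‖y‖) (γ ‖y‖)).1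
  have hCclosed : ∀ y, IsClosed (Cset y) := fun y =>
    (constraint_convex_closed (fun i => φ i y) (fun i => fderiv ℝ (φ i) y (f y))
      (fun j => w j y) (α ‖y‖) (β ‖y‖) (γ ‖y‖)).2
  have h0N : (0 : EuclideanSpace ℝ (Fin n)) ∈ N := mem_of_mem_nhds hNnbd
  have hsubGpt : ∀ ys : Fin (M + L) → EuclideanSpace ℝ (Fin n),
      (∀ k, ys k ∈ N) → G ⊆ Gpt ys := by
    intro ys hys p hp
    exact (hGptiff ys p).mpr fun k => (hGiff p).mp hp _ (hys k)
  have hGptEq : ∀ ys, Gpt ys = ⋂ k, Cset (ys k) := by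
    intro ys
    ext p
    rw [hGptiff]
    simp [Set.mem_iInter]
  have hGptclosed : ∀ ys, IsClosed (Gpt ys) := by
    intro ys; rw [hGptEq]; exact isClosed_iInter fun k => hCclosed _
  have hGptconv : ∀ ys, Convex ℝ (Gpt ys) := by
    intro ys; rw [hGptEq]; exact convex_iInter fun k => hCconv _
  have hbdd : ∀ ys, BddBelow (ψ '' Gpt ys) := fun ys =>
    ⟨0, by rintro x ⟨q, _, rfl⟩; exact hψnonneg q⟩
  have hΦstar : Φ ystar = v := by
    rw [hΦ]
    apply le_antisymm
    · exact csInf_le (hbdd ystar) ⟨_, hpstarFeas, rfl⟩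
    · refine le_csInf ⟨v, ⟨_, hpstarFeas, rfl⟩⟩ ?_
      rintro b ⟨q, hq, rfl⟩
      exact hpstarMin q hq
  have hkey : ∀ ys : Fin (M + L) → EuclideanSpace ℝ (Fin n), (∀ k, ys k ∈ N) →
      ∃ q ∈ Gpt ys, ψ q ≤ v := by
    intro ys hys
    obtain ⟨q, hq, hqmin⟩ := exists_min_on ψ hψcont hψcoercive (hGptclosed ys)
      ⟨g₀, hsubGpt ys hys hg₀G⟩
    refine ⟨q, hq, ?_⟩
    have h1 : ψ q ≤ Φ ys := by
      rw [hΦ]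
      refine le_csInf ⟨ψ q, ⟨q, hq, rfl⟩⟩ ?_
      rintro b ⟨x, hx, rfl⟩
      exact hqmin x hx
    exact h1.trans ((hystarmax ys hys).trans_eq hΦstar)
  set K : Set (EuclideanSpace ℝ (Fin M) × EuclideanSpace ℝ (Fin L)) :=
    {p | ψ p ≤ v} with hK
  have hKconv : Convex ℝ K := by
    rw [hK]
    simpa [Set.sep_univ] using (hψstrict.convexOn).convex_le v
  have hKclosed : IsClosed K := by
    rw [hK]; exact isClosed_le hψcont continuous_const
  have hKcpt : IsCompact K := by
    obtain ⟨R, hR⟩ := hψcoercive (v + 1)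
    refine (isCompact_closedBall (0 : EuclideanSpace ℝ (Fin M) × EuclideanSpace ℝ (Fin L))
      (max R 0)).of_isClosed_subset hKclosed ?_
    intro p hp
    have hpv : ψ p ≤ v := hp
    simp only [Metric.mem_closedBall, dist_zero_right]
    by_contra hc
    push_neg at hc
    have : v + 1 ≤ ψ p := hR p ((le_max_left _ _).trans hc.le)
    linarith
  have hrank : Module.finrank ℝ (EuclideanSpace ℝ (Fin M) × EuclideanSpace ℝ (Fin L)) = M + L := by
    simp [Module.finrank_prod, finrank_euclideanSpace_fin]
  -- finite intersections of the constraint sets with K are nonempty, via Helly's theorem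
  have hfin : ∀ t : Finset {y // y ∈ N}, (K ∩ ⋂ j ∈ t, Cset ↑j).Nonempty := by
    intro t
    set F : Option {y // y ∈ N} →
        Set (EuclideanSpace ℝ (Fin M) × EuclideanSpace ℝ (Fin L)) :=
      fun o => o.elim K (fun j => Cset ↑j) with hF
    set s : Finset (Option {y // y ∈ N}) := insert none (t.image some) with hs
    have hmain : (⋂ i ∈ s, F i).Nonempty := by
      apply Convex.helly_theorem' (𝕜 := ℝ)
      · intro i _
        match i with
        | none => exact hKconv
        | some j => exact hCconv j
      · intro I hIs hIcard
        by_cases hnone : none ∈ I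
        · set J : Finset {y // y ∈ N} := t.filter (fun j => some j ∈ I) with hJ
          have hJcard : J.card ≤ M + L := by
            have h1 : J.image some ⊆ I.erase none := by
              intro o ho
              simp only [Finset.mem_image] at ho
              obtain ⟨j, hj, rfl⟩ := ho
              exact Finset.mem_erase.mpr ⟨Option.some_ne_none j, (Finset.mem_filter.mp hj).2⟩
            have h2 : (J.image some).card = J.card :=
              Finset.card_image_of_injective J (Option.some_injective _)
            have h3 := Finset.card_le_card h1
            have h4 := Finset.card_erase_of_mem hnone
            rw [hrank] at hIcard
            omega
          obtain ⟨ys, hysmem, hyscov⟩ := finset_cover (J.image Subtype.val) (M + L)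
            (le_trans Finset.card_image_le hJcard) 0
          have hysN : ∀ k, ys k ∈ N := by
            intro k
            rcases hysmem k with h | h
            · obtain ⟨j, _, hjk⟩ := Finset.mem_image.mp h
              exact hjk ▸ j.2
            · rw [h]; exact h0N
          obtain ⟨q, hqGpt, hqv⟩ := hkey ys hysN
          refine ⟨q, Set.mem_biInter ?_⟩
          intro i hiI
          match i with
          | none => exact hqv
          | some j =>
            have hjt : j ∈ t := by
              have := hIs hiI
              rw [hs] at this
              rcases Finset.mem_insert.mp this with h | h
              · exact absurd h (Option.some_ne_none j)
              · obtain ⟨j', hj', hjj⟩ := Finset.mem_image.mp h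
                exact (Option.some_injective _ hjj) ▸ hj'
            have hjJ : j ∈ J := Finset.mem_filter.mpr ⟨hjt, hiI⟩
            obtain ⟨k, hk⟩ := hyscov ↑j (Finset.mem_image_of_mem _ hjJ)
            have := (hGptiff ys q).mp hqGpt k
            rw [hk] at this
            exact this
        · refine ⟨g₀, Set.mem_biInter ?_⟩
          intro i hiI
          match i with
          | none => exact absurd hiI hnone
          | some j => exact (hGiff g₀).mp hg₀G j j.2
    obtain ⟨q, hq⟩ := hmain
    have hqall := Set.mem_iInter₂.mp hq
    have hnones : none ∈ s := by rw [hs]; exact Finset.mem_insert_self _ _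
    refine ⟨q, hqall none hnones, Set.mem_biInter ?_⟩
    intro j hjt
    have hsomes : some j ∈ s := by
      rw [hs]
      exact Finset.mem_insert.mpr (Or.inr (Finset.mem_image_of_mem some hjt))
    exact hqall (some j) hsomes
  -- compactness: pass to the full intersection
  have hGK : (K ∩ ⋂ j : {y // y ∈ N}, Cset ↑j).Nonempty := by
    by_contra hemp
    rw [Set.not_nonempty_iff_eq_empty] at hemp
    obtain ⟨t, ht⟩ := hKcpt.elim_finite_subfamily_closed (fun j : {y // y ∈ N} => Cset ↑j)
      (fun j => hCclosed _) hemp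
    exact absurd ht (Set.nonempty_iff_ne_empty.mp (hfin t))
  obtain ⟨p, hpK, hpC⟩ := hGK
  have hpG : p ∈ G := (hGiff p).mpr fun y hy => Set.mem_iInter.mp hpC ⟨y, hy⟩
  have hpGpt : p ∈ Gpt ystar := hsubGpt ystar hystarN hpG
  have hvp : ψ p = v := le_antisymm hpK (hpstarMin p hpGpt)
  have hpeq : (lstar, cstar) = p := by
    by_contra hne
    have hmid := hψstrict.2 (Set.mem_univ (lstar, cstar)) (Set.mem_univ p) hne
      (by norm_num : (0:ℝ) < 1/2) (by norm_num : (0:ℝ) < 1/2) (by norm_num : (1:ℝ)/2 + 1/2 = 1)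
    have hmemmid : ((1/2 : ℝ)) • ((lstar, cstar) :
        EuclideanSpace ℝ (Fin M) × EuclideanSpace ℝ (Fin L)) + (1/2 : ℝ) • p ∈ Gpt ystar :=
      hGptconv ystar hpstarFeas hpGpt (by norm_num) (by norm_num) (by norm_num)
    have hle := hpstarMin _ hmemmid
    rw [hvp, ← hv] at hmid
    simp only [smul_eq_mul] at hmid ⊢
    linarith
  constructor
  · rw [hpeq]; exact hpG
  · exact fun p' hp' => hpstarMin p' (hsubGpt ystar hystarN hp')
end

section
/- Let D ⊆ ℝⁿ be open with 0 ∈ D, let f : D → ℝⁿ be Lipschitz continuous with f(0) = 0, let N ⊆ D be a compact neighborhood of 0, and let V : D → ℝ be continuously differentiable with V(0) = 0, V(y) > 0 for every y ∈ N \ {0}, and ⟨∇V(y), f(y)⟩ ≤ 0 for every y ∈ N. Then the origin is Lyapunov stable for the system ẋ = f(x): for every ε > 0 there exists δ > 0 such that every differentiable curve x : [0,∞) → D satisfying x'(t) = f(x(t)) for all t ≥ 0 and ‖x(0)‖ < δ satisfies ‖x(t)‖ < ε for all t ≥ 0. -/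
/-!
Fix a sphere of radius `ρ ≤ ε` inside `N`. By compactness `V` has a positive lower bound `m` on
it, and by continuity `V < m` on a small ball of radius `δ` around the origin. Along a solution
`V` does not increase as long as the solution stays in `N`, so a solution starting in the
`δ`-ball that reached the sphere would, at its first hitting time `t₀`, satisfy
`m ≤ V (x t₀) ≤ V (x 0) < m`.
-/

open Set Metric Filter Topology

theorem IsCompact.exists_pos_forall_le {α : Type*} [TopologicalSpace α] {K : Set α}
    {g : α → ℝ} (hK : IsCompact K) (hg : ContinuousOn g K) (hpos : ∀ y ∈ K, 0 < g y) :
    ∃ m > 0, ∀ y ∈ K, m ≤ g y := by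
  rcases K.eq_empty_or_nonempty with rfl | hne
  · exact ⟨1, one_pos, by simp⟩
  · obtain ⟨y, hy, hmin⟩ := hK.exists_isMinOn hne hg
    exact ⟨g y, hpos y hy, hmin⟩

theorem exists_mem_Icc_eq_forall_le_of_lt_of_le {g : ℝ → ℝ} {a b r : ℝ} (hab : a ≤ b)
    (hg : ContinuousOn g (Icc a b)) (ha : g a < r) (hb : r ≤ g b) :
    ∃ c ∈ Icc a b, g c = r ∧ ∀ s ∈ Icc a c, g s ≤ r := by
  have hK : IsCompact (Icc a b ∩ g ⁻¹' Ici r) :=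
    isCompact_Icc.of_isClosed_subset (hg.preimage_isClosed_of_isClosed isClosed_Icc isClosed_Ici)
      inter_subset_left
  obtain ⟨c, ⟨hc, hrc⟩, hc_least⟩ := hK.exists_isLeast ⟨b, right_mem_Icc.2 hab, hb⟩
  have hbelow : ∀ s ∈ Ico a c, g s < r := fun s hs ↦
    lt_of_not_ge fun hrs ↦ hs.2.not_ge (hc_least ⟨⟨hs.1, hs.2.le.trans hc.2⟩, hrs⟩)
  have hac : a ≠ c := by
    rintro rfl
    exact ha.not_ge hrc
  have hclosure : closure (Ico a c) ⊆ Icc a c ∩ g ⁻¹' Iic r :=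
    closure_minimal (fun s hs ↦ ⟨Ico_subset_Icc_self hs, (hbelow s hs).le⟩)
      ((hg.mono (Icc_subset_Icc_right hc.2)).preimage_isClosed_of_isClosed isClosed_Icc
        isClosed_Iic)
  have hle : ∀ s ∈ Icc a c, g s ≤ r := fun s hs ↦ (hclosure (by rwa [closure_Ico hac])).2
  exact ⟨c, hc, le_antisymm (hle c (right_mem_Icc.2 hc.1)) hrc, hle⟩

section

variable {E : Type*} [NormedAddCommGroup E] [NormedSpace ℝ E]

def IsLyapunovStable (f : E → E) (D : Set E) : Prop :=
  ∀ ε > (0 : ℝ), ∃ δ > (0 : ℝ), ∀ x : ℝ → E,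
    (∀ t, 0 ≤ t → x t ∈ D) → (∀ t, 0 ≤ t → HasDerivAt x (f (x t)) t) →
    ‖x 0‖ < δ → ∀ t, 0 ≤ t → ‖x t‖ < ε

theorem antitoneOn_comp_of_fderiv_apply_nonpos {V : E → ℝ} {f : E → E} {x : ℝ → E} {a b : ℝ}
    (hV : ∀ s ∈ Icc a b, DifferentiableAt ℝ V (x s))
    (hx : ∀ s ∈ Icc a b, HasDerivAt x (f (x s)) s)
    (hVf : ∀ s ∈ Ioo a b, fderiv ℝ V (x s) (f (x s)) ≤ 0) :
    AntitoneOn (fun s ↦ V (x s)) (Icc a b) := by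
  have hderiv : ∀ s ∈ Icc a b,
      HasDerivAt (fun u ↦ V (x u)) (fderiv ℝ V (x s) (f (x s))) s := fun s hs ↦
    (hV s hs).hasFDerivAt.comp_hasDerivAt s (hx s hs)
  refine antitoneOn_of_hasDerivWithinAt_nonpos (f' := fun s ↦ fderiv ℝ V (x s) (f (x s)))
    (convex_Icc a b)
    (fun s hs ↦ (hderiv s hs).continuousAt.continuousWithinAt) (fun s hs ↦ ?_) (fun s hs ↦ ?_)
  · rw [interior_Icc] at hs
    exact (hderiv s (Ioo_subset_Icc_self hs)).hasDerivWithinAt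
  · rw [interior_Icc] at hs
    exact hVf s hs

theorem norm_lt_of_lt_forall_sphere_le {N : Set E} {f : E → E} {V : E → ℝ} {x : ℝ → E}
    {r m : ℝ} (hrN : closedBall 0 r ⊆ N) (hV : ∀ y ∈ N, DifferentiableAt ℝ V y)
    (hVf : ∀ y ∈ N, fderiv ℝ V y (f y) ≤ 0) (hm : ∀ y ∈ sphere 0 r, m ≤ V y)
    (hx : ∀ t, 0 ≤ t → HasDerivAt x (f (x t)) t) (hx0 : ‖x 0‖ < r) (hVx0 : V (x 0) < m) :
    ∀ t, 0 ≤ t → ‖x t‖ < r := by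
  intro t ht
  by_contra! hrt
  obtain ⟨t₀, ht₀, hxt₀, hle⟩ := exists_mem_Icc_eq_forall_le_of_lt_of_le (g := fun s ↦ ‖x s‖)
    ht (fun s hs ↦ (hx s hs.1).continuousAt.norm.continuousWithinAt) hx0 hrt
  have hxN : ∀ s ∈ Icc 0 t₀, x s ∈ N := fun s hs ↦ hrN (mem_closedBall_zero_iff.2 (hle s hs))
  have hanti := antitoneOn_comp_of_fderiv_apply_nonpos (fun s hs ↦ hV _ (hxN s hs))
    (fun s hs ↦ hx s hs.1) (fun s hs ↦ hVf _ (hxN s (Ioo_subset_Icc_self hs)))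
  have hdecr : V (x t₀) ≤ V (x 0) :=
    hanti (left_mem_Icc.2 ht₀.1) (right_mem_Icc.2 ht₀.1) ht₀.1
  have hsphere : m ≤ V (x t₀) := hm _ (mem_sphere_zero_iff_norm.2 hxt₀)
  linarith

theorem isLyapunovStable_of_lyapunovFunction {D N : Set E} {f : E → E} {V : E → ℝ}
    (hD : IsOpen D) (hND : N ⊆ D) (hNcpt : IsCompact N) (hN : N ∈ 𝓝 0)
    (hV : ContDiffOn ℝ 1 V D) (hV0 : V 0 = 0) (hVpos : ∀ y ∈ N, y ≠ 0 → 0 < V y)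
    (hVf : ∀ y ∈ N, fderiv ℝ V y (f y) ≤ 0) : IsLyapunovStable f D := by
  have hVdiff : ∀ y ∈ N, DifferentiableAt ℝ V y := fun y hy ↦
    (hV.contDiffAt (hD.mem_nhds (hND hy))).differentiableAt one_ne_zero
  intro ε hε
  obtain ⟨r, hr, hrN⟩ := nhds_basis_closedBall.mem_iff.1 hN
  have hρ : 0 < min r ε := lt_min hr hε
  have hρN : closedBall 0 (min r ε) ⊆ N :=
    (closedBall_subset_closedBall (min_le_left _ _)).trans hrN
  have hsphere : sphere (0 : E) (min r ε) ⊆ N := sphere_subset_closedBall.trans hρN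
  obtain ⟨m, hm, hVm⟩ := (hNcpt.of_isClosed_subset isClosed_sphere hsphere).exists_pos_forall_le
    (hV.continuousOn.mono (hsphere.trans hND))
    fun y hy ↦ hVpos y (hsphere hy) (ne_of_mem_sphere hy hρ.ne')
  have hVcont : ContinuousAt V 0 := (hVdiff 0 (mem_of_mem_nhds hN)).continuousAt
  obtain ⟨δ, hδ, hδm⟩ := eventually_nhds_iff_ball.1 (hVcont.eventually (gt_mem_nhds (hV0 ▸ hm)))
  refine ⟨min δ (min r ε), lt_min hδ hρ, fun x _ hx hx0 t ht ↦ ?_⟩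
  have hx0δ : x 0 ∈ ball 0 δ := mem_ball_zero_iff.2 (hx0.trans_le (min_le_left _ _))
  refine (norm_lt_of_lt_forall_sphere_le hρN hVdiff hVf hVm hx
    (hx0.trans_le (min_le_right _ _)) (hδm _ hx0δ) t ht).trans_le (min_le_right _ _)

end

theorem stmt_4_general
    (n : ℕ)
    (D : Set (EuclideanSpace ℝ (Fin n))) (hD : IsOpen D)
    (f : EuclideanSpace ℝ (Fin n) → EuclideanSpace ℝ (Fin n))
    (N : Set (EuclideanSpace ℝ (Fin n))) (hND : N ⊆ D)
    (hNcpt : IsCompact N) (hNnbd : N ∈ nhds (0 : EuclideanSpace ℝ (Fin n)))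
    (V : EuclideanSpace ℝ (Fin n) → ℝ)
    (hVsmooth : ContDiffOn ℝ 1 V D)
    (hV0 : V 0 = 0)
    (hVpos : ∀ y ∈ N, y ≠ 0 → 0 < V y)
    (hVdecr : ∀ y ∈ N, fderiv ℝ V y (f y) ≤ 0) :
    -- the origin is Lyapunov stable for ẋ = f(x)
    ∀ ε > (0 : ℝ), ∃ δ > (0 : ℝ), ∀ x : ℝ → EuclideanSpace ℝ (Fin n),
      (∀ t, 0 ≤ t → x t ∈ D) →
      (∀ t, 0 ≤ t → HasDerivAt x (f (x t)) t) →
      ‖x 0‖ < δ → ∀ t, 0 ≤ t → ‖x t‖ < ε :=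
  isLyapunovStable_of_lyapunovFunction hD hND hNcpt hNnbd hVsmooth hV0 hVpos hVdecr

theorem stmt_4
    (n : ℕ) (hn : 1 ≤ n)
    (D : Set (EuclideanSpace ℝ (Fin n))) (hD : IsOpen D)
    (h0D : (0 : EuclideanSpace ℝ (Fin n)) ∈ D)
    (f : EuclideanSpace ℝ (Fin n) → EuclideanSpace ℝ (Fin n))
    (hfLip : ∃ K : NNReal, LipschitzOnWith K f D) (hf0 : f 0 = 0)
    (N : Set (EuclideanSpace ℝ (Fin n))) (hND : N ⊆ D)
    (hNcpt : IsCompact N) (hNnbd : N ∈ nhds (0 : EuclideanSpace ℝ (Fin n)))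
    (V : EuclideanSpace ℝ (Fin n) → ℝ)
    (hVsmooth : ContDiffOn ℝ 1 V D)
    (hV0 : V 0 = 0)
    (hVpos : ∀ y ∈ N, y ≠ 0 → 0 < V y)
    (hVdecr : ∀ y ∈ N, fderiv ℝ V y (f y) ≤ 0) :
    -- the origin is Lyapunov stable for ẋ = f(x)
    ∀ ε > (0 : ℝ), ∃ δ > (0 : ℝ), ∀ x : ℝ → EuclideanSpace ℝ (Fin n),
      (∀ t, 0 ≤ t → x t ∈ D) →
      (∀ t, 0 ≤ t → HasDerivAt x (f (x t)) t) →
      ‖x 0‖ < δ → ∀ t, 0 ≤ t → ‖x t‖ < ε :=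
  stmt_4_general n D hD f N hND hNcpt hNnbd V hVsmooth hV0 hVpos hVdecr
end

section
/- Let N ⊆ ℝⁿ be a compact neighborhood of 0 and let V : N → ℝ be continuous with V(0) = 0. Then V(y) > 0 for every y ∈ N \ {0} if and only if there exists a class-K function α : [0,∞) → [0,∞) such that α(‖y‖) ≤ V(y) for every y ∈ N. -/
open Set Metric MeasureTheory intervalIntegral

lemma IsClassK.pos {α : ℝ → ℝ} (hα : IsClassK α) {r : ℝ} (hr : 0 < r) : 0 < α r :=
  hα.2.2.1 ▸ hα.2.1 self_mem_Ici hr.le hr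

section InfOutsideBall

variable {E : Type*} [SeminormedAddGroup E] {V : E → ℝ} {N : Set E}

/-- The `1` keeps the value positive once `N` lies inside the ball. -/
noncomputable def infOutsideBall (V : E → ℝ) (N : Set E) (r : ℝ) : ℝ :=
  sInf (insert 1 (V '' (N \ ball 0 r)))

lemma bddBelow_insert_one_image (hV : ∀ y ∈ N, 0 ≤ V y) (r : ℝ) :
    BddBelow (insert 1 (V '' (N \ ball 0 r))) :=
  ⟨0, forall_mem_insert.2 ⟨zero_le_one, forall_mem_image.2 fun y hy => hV y hy.1⟩⟩

lemma infOutsideBall_nonneg (hV : ∀ y ∈ N, 0 ≤ V y) (r : ℝ) : 0 ≤ infOutsideBall V N r :=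
  le_csInf (insert_nonempty _ _)
    (forall_mem_insert.2 ⟨zero_le_one, forall_mem_image.2 fun y hy => hV y hy.1⟩)

lemma infOutsideBall_mono (hV : ∀ y ∈ N, 0 ≤ V y) : Monotone (infOutsideBall V N) :=
  fun _ _ hrs => csInf_le_csInf (bddBelow_insert_one_image hV _) (insert_nonempty _ _)
    (insert_subset_insert (image_mono (sdiff_subset_sdiff_right (ball_subset_ball hrs))))

lemma infOutsideBall_norm_le (hV : ∀ y ∈ N, 0 ≤ V y) {y : E} (hy : y ∈ N) :
    infOutsideBall V N ‖y‖ ≤ V y :=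
  csInf_le (bddBelow_insert_one_image hV _)
    (mem_insert_of_mem _ ⟨y, ⟨hy, by simp⟩, rfl⟩)

lemma infOutsideBall_pos (hN : IsCompact N) (hVc : ContinuousOn V N)
    (hpos : ∀ y ∈ N, y ≠ 0 → 0 < V y) {r : ℝ} (hr : 0 < r) : 0 < infOutsideBall V N r := by
  have hcpt : IsCompact (insert 1 (V '' (N \ ball 0 r))) :=
    ((hN.diff isOpen_ball).image_of_continuousOn (hVc.mono sdiff_subset)).insert 1
  rcases hcpt.sInf_mem (insert_nonempty _ _) with h1 | ⟨y, ⟨hyN, hyr⟩, hy⟩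
  · simp [infOutsideBall, h1]
  · rw [infOutsideBall, ← hy]
    exact hpos y hyN fun h => hyr (h ▸ mem_ball_self hr)

end InfOutsideBall

section Smoothing

variable {h : ℝ → ℝ}

lemma Monotone.mul_le_intervalIntegral (hh : Monotone h) {a b : ℝ} (hab : a ≤ b) :
    (b - a) * h a ≤ ∫ t in a..b, h t := by
  simpa using integral_mono_on hab (intervalIntegrable_const (μ := volume))
    hh.intervalIntegrable fun _ ht => hh ht.1

lemma Monotone.intervalIntegral_le_mul (hh : Monotone h) {a b : ℝ} (hab : a ≤ b) :
    ∫ t in a..b, h t ≤ (b - a) * h b := by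
  simpa using integral_mono_on hab hh.intervalIntegrable
    (intervalIntegrable_const (μ := volume)) fun _ ht => hh ht.2

lemma Monotone.strictMonoOn_primitive_div_one_add (hh : Monotone h)
    (hpos : ∀ r, 0 < r → 0 < h r) :
    StrictMonoOn (fun r => (∫ t in (0 : ℝ)..r, h t) / (1 + r)) (Ici 0) := by
  intro a (ha : 0 ≤ a) b (hb : 0 ≤ b) hab
  have hsplit : ∫ t in (0 : ℝ)..b, h t = (∫ t in (0 : ℝ)..a, h t) + ∫ t in a..b, h t :=
    (integral_add_adjacent_intervals hh.intervalIntegrable hh.intervalIntegrable).symm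
  have hlow : (b - a) * h a ≤ ∫ t in a..b, h t := hh.mul_le_intervalIntegral hab.le
  have hup : ∫ t in (0 : ℝ)..a, h t ≤ a * h a := by
    simpa using hh.intervalIntegral_le_mul ha
  have hI : 0 < ∫ t in a..b, h t :=
    intervalIntegral_pos_of_pos_on hh.intervalIntegrable
      (fun t ht => hpos t (ha.trans_lt ht.1)) hab
  dsimp only
  rw [div_lt_div_iff₀ (by linarith) (by linarith), hsplit]
  nlinarith [mul_le_mul_of_nonneg_left hlow ha]

lemma Monotone.exists_isClassK_le (hh : Monotone h) (h0 : 0 ≤ h 0)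
    (hpos : ∀ r, 0 < r → 0 < h r) : ∃ α, IsClassK α ∧ ∀ r, 0 ≤ r → α r ≤ h r := by
  refine ⟨fun r => (∫ t in (0 : ℝ)..r, h t) / (1 + r),
    ⟨?_, hh.strictMonoOn_primitive_div_one_add hpos, by simp, fun r (hr : 0 ≤ r) => ?_⟩,
    fun r hr => ?_⟩
  · exact (continuous_primitive (fun _ _ => hh.intervalIntegrable) 0).continuousOn.div
      (by fun_prop) fun r (hr : 0 ≤ r) => by positivity
  · exact div_nonneg (integral_nonneg hr fun t ht => h0.trans (hh ht.1)) (by positivity)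
  · have hup : ∫ t in (0 : ℝ)..r, h t ≤ r * h r := by simpa using hh.intervalIntegral_le_mul hr
    rw [div_le_iff₀ (by linarith)]
    nlinarith [h0.trans (hh hr)]

end Smoothing

theorem stmt_6_general
    (n : ℕ)
    (N : Set (EuclideanSpace ℝ (Fin n)))
    (hNcpt : IsCompact N)
    (V : EuclideanSpace ℝ (Fin n) → ℝ)
    (hVcont : ContinuousOn V N) (hV0 : V 0 = 0) :
    (∀ y ∈ N, y ≠ 0 → 0 < V y) ↔
      ∃ α : ℝ → ℝ, IsClassK α ∧ ∀ y ∈ N, α ‖y‖ ≤ V y := by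
  constructor
  · intro hpos
    have hVnn : ∀ y ∈ N, 0 ≤ V y := fun y hy =>
      (eq_or_ne y 0).elim (fun h => h ▸ hV0.ge) fun h => (hpos y hy h).le
    obtain ⟨α, hα, hαle⟩ := (infOutsideBall_mono hVnn).exists_isClassK_le
      (infOutsideBall_nonneg hVnn 0) fun r hr => infOutsideBall_pos hNcpt hVcont hpos hr
    exact ⟨α, hα, fun y hy => (hαle _ (norm_nonneg y)).trans (infOutsideBall_norm_le hVnn hy)⟩
  · rintro ⟨α, hα, hαV⟩ y hy hy0
    exact (hα.pos (norm_pos_iff.2 hy0)).trans_le (hαV y hy)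

theorem stmt_6
    (n : ℕ)
    (N : Set (EuclideanSpace ℝ (Fin n)))
    (hNcpt : IsCompact N) (hNnbd : N ∈ nhds (0 : EuclideanSpace ℝ (Fin n)))
    (V : EuclideanSpace ℝ (Fin n) → ℝ)
    (hVcont : ContinuousOn V N) (hV0 : V 0 = 0) :
    (∀ y ∈ N, y ≠ 0 → 0 < V y) ↔
      ∃ α : ℝ → ℝ, IsClassK α ∧ ∀ y ∈ N, α ‖y‖ ≤ V y :=
  stmt_6_general n N hNcpt V hVcont hV0
end

section
/- Suppose Slater's condition holds: there exists ξ̂ ∈ Ξ with g(ξ̂, θ) < 0 for every θ ∈ Θ. Then the optimal value of the convex semi-infinite program equals the max–min value with ν sampled constraints: inf { ψ(ξ) : ξ ∈ Ξ, g(ξ, θ) ≤ 0 for all θ ∈ Θ } = sup over (θ₁, …, θ_ν) ∈ Θ^ν of inf { ψ(ξ) : ξ ∈ Ξ, g(ξ, θ_k) ≤ 0 for all k = 1, …, ν }. -/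
/-!
Each sampled program relaxes the full one, which gives `≥`. Conversely, suppose every sampled
program has a point with `ψ < c`. Moving such a point slightly towards the Slater point makes it
strictly feasible for its sample, so by compactness of `Θ^ν` finitely many of these points serve
all samples, and they lie in a common ball. Inside that ball the level set `{ψ ≤ c}` and the
constraint sets `{g(·, θ) ≤ 0}` are compact and convex; any `ν` constraint sets meet the level set,
and all constraint sets contain the Slater point, so Helly's theorem in `ℝ^ν` yields a feasible
point with `ψ ≤ c`.
-/

open Set Module

lemma Finset.exists_fin_fun_subset_range {ι : Type*} [Nonempty ι] {d : ℕ} (I : Finset ι)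
    (hI : I.card ≤ d) : ∃ f : Fin d → ι, (I : Set ι) ⊆ Set.range f := by
  refine ⟨Function.extend (Fin.castLE hI) (fun k ↦ (I.equivFin.symm k : ι))
    (fun _ ↦ Classical.arbitrary ι), fun i hi ↦ ⟨Fin.castLE hI (I.equivFin ⟨i, hi⟩), ?_⟩⟩
  rw [(Fin.castLE_injective hI).extend_apply, Equiv.symm_apply_apply]

theorem Convex.inter_iInter_nonempty_of_forall_card_le {𝕜 E ι : Type*} [Field 𝕜] [LinearOrder 𝕜]
    [IsStrictOrderedRing 𝕜] [AddCommGroup E] [Module 𝕜 E] [FiniteDimensional 𝕜 E]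
    [TopologicalSpace E] [T2Space E] {K : Set E} {D : ι → Set E}
    (hK : Convex 𝕜 K) (hKc : IsCompact K) (hD : ∀ i, Convex 𝕜 (D i))
    (hDc : ∀ i, IsCompact (D i)) (hcommon : (⋂ i, D i).Nonempty)
    (h : ∀ I : Finset ι, I.card ≤ finrank 𝕜 E → (K ∩ ⋂ i ∈ I, D i).Nonempty) :
    (K ∩ ⋂ i, D i).Nonempty := by
  -- Helly for `K` together with the `D i`: subfamilies without `K` meet at the common point.
  let F : Option ι → Set E := fun o ↦ o.elim K D
  have hF : (⋂ o, F o).Nonempty := by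
    refine Convex.helly_theorem_compact' (𝕜 := 𝕜) (fun o ↦ ?_) (fun o ↦ ?_) fun J hJ ↦ ?_
    · cases o <;> simp [F, hK, hD]
    · cases o <;> simp [F, hKc, hDc]
    by_cases hnone : none ∈ J
    · obtain ⟨x, hxK, hxD⟩ := h J.eraseNone (by rw [Finset.card_eraseNone_of_mem hnone]; omega)
      refine ⟨x, mem_iInter₂.2 fun o ho ↦ ?_⟩
      cases o with
      | none => exact hxK
      | some i => exact mem_iInter₂.1 hxD i (Finset.mem_eraseNone.2 ho)
    · obtain ⟨x, hx⟩ := hcommon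
      refine ⟨x, mem_iInter₂.2 fun o ho ↦ ?_⟩
      cases o with
      | none => exact absurd ho hnone
      | some i => exact mem_iInter.1 hx i
  rwa [iInter_option] at hF

theorem Convex.exists_lt_forall_lt_of_slater {E κ : Type*} [AddCommGroup E] [Module ℝ E]
    [TopologicalSpace E] [ContinuousAdd E] [ContinuousSMul ℝ E] {Ξ : Set E} (hΞ : Convex ℝ Ξ)
    {ψ : E → ℝ} (hψ : Continuous ψ) {φ : κ → E → ℝ} (hφ : ∀ k, ConvexOn ℝ Ξ (φ k))
    {x₀ x : E} (hx₀ : x₀ ∈ Ξ) (hx₀φ : ∀ k, φ k x₀ < 0) (hx : x ∈ Ξ) (hxφ : ∀ k, φ k x ≤ 0)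
    {c : ℝ} (hxc : ψ x < c) : ∃ y ∈ Ξ, ψ y < c ∧ ∀ k, φ k y < 0 := by
  have hcont : Continuous fun t : ℝ ↦ ψ (t • x₀ + (1 - t) • x) := by fun_prop
  have hnear : ∀ᶠ t in nhdsWithin (0 : ℝ) (Ioi 0), ψ (t • x₀ + (1 - t) • x) < c ∧ t < 1 := by
    refine Filter.Eventually.and (nhdsWithin_le_nhds ?_) (nhdsWithin_le_nhds (gt_mem_nhds one_pos))
    exact hcont.continuousAt.eventually_lt continuousAt_const (by simpa using hxc)
  obtain ⟨t, ⟨hψt, ht1⟩, ht0 : 0 < t⟩ := (hnear.and self_mem_nhdsWithin).exists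
  refine ⟨_, hΞ hx₀ hx ht0.le (by linarith) (by ring), hψt, fun k ↦ ?_⟩
  calc φ k (t • x₀ + (1 - t) • x) ≤ t • φ k x₀ + (1 - t) • φ k x :=
        (hφ k).2 hx₀ hx ht0.le (by linarith) (by ring)
    _ < 0 := by
        simp only [smul_eq_mul]
        nlinarith [hx₀φ k, hxφ k]

theorem exists_bounded_sampled_witnesses {E P κ : Type*} [NormedAddCommGroup E] [NormedSpace ℝ E]
    [TopologicalSpace P] [Finite κ] {Ξ : Set E} (hΞ : Convex ℝ Ξ) {Θ : Set P}
    (hΘ : IsCompact Θ) {ψ : E → ℝ} (hψ : Continuous ψ) {g : E → P → ℝ}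
    (hg : ∀ ξ, Continuous (g ξ)) (hgconv : ∀ θ ∈ Θ, ConvexOn ℝ Ξ fun ξ ↦ g ξ θ)
    {ξ₀ : E} (hξ₀ : ξ₀ ∈ Ξ) (hslater : ∀ θ ∈ Θ, g ξ₀ θ < 0) {c : ℝ}
    (h : ∀ τ : κ → P, (∀ k, τ k ∈ Θ) → ∃ ξ ∈ Ξ, (∀ k, g ξ (τ k) ≤ 0) ∧ ψ ξ < c) :
    ∃ R, ‖ξ₀‖ ≤ R ∧ ∀ τ : κ → P, (∀ k, τ k ∈ Θ) →
      ∃ ξ ∈ Ξ, ‖ξ‖ ≤ R ∧ (∀ k, g ξ (τ k) ≤ 0) ∧ ψ ξ < c := by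
  let U : E → Set (κ → P) := fun ξ ↦ {τ | ∀ k, g ξ (τ k) < 0}
  have hU : ∀ ξ ∈ {ξ ∈ Ξ | ψ ξ < c}, IsOpen (U ξ) := fun ξ _ ↦ by
    simp only [U, ofPred_forall]
    exact isOpen_iInter_of_finite fun k ↦
      isOpen_lt ((hg ξ).comp (continuous_apply k)) continuous_const
  have hcover : univ.pi (fun _ ↦ Θ) ⊆ ⋃ ξ ∈ {ξ ∈ Ξ | ψ ξ < c}, U ξ := by
    intro τ hτ
    rw [mem_univ_pi] at hτ
    obtain ⟨ξ, hξ, hξg, hξc⟩ := h τ hτ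
    obtain ⟨y, hy, hyc, hyg⟩ := hΞ.exists_lt_forall_lt_of_slater hψ
      (φ := fun k ξ ↦ g ξ (τ k)) (fun k ↦ hgconv _ (hτ k)) hξ₀ (fun k ↦ hslater _ (hτ k))
      hξ hξg hξc
    exact mem_biUnion ⟨hy, hyc⟩ hyg
  obtain ⟨W, hWsub, hWfin, hWcover⟩ :=
    (isCompact_univ_pi fun _ ↦ hΘ).elim_finite_subcover_image hU hcover
  obtain ⟨R, hR⟩ := (hWfin.insert ξ₀).isBounded.subset_closedBall 0
  refine ⟨R, by simpa using hR (mem_insert _ _), fun τ hτ ↦ ?_⟩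
  obtain ⟨ξ, hξW, hξU⟩ := mem_iUnion₂.1 (hWcover (mem_univ_pi.2 hτ))
  exact ⟨ξ, (hWsub hξW).1, by simpa using hR (mem_insert_of_mem _ hξW), fun k ↦ (hξU k).le,
    (hWsub hξW).2⟩

theorem exists_feasible_le_of_forall_sampled_lt {E P : Type*} [NormedAddCommGroup E]
    [NormedSpace ℝ E] [FiniteDimensional ℝ E] [TopologicalSpace P] {d : ℕ}
    (hd : finrank ℝ E ≤ d) {Ξ : Set E} (hΞcl : IsClosed Ξ) (hΞ : Convex ℝ Ξ) {Θ : Set P}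
    (hΘne : Θ.Nonempty) (hΘ : IsCompact Θ) {ψ : E → ℝ} (hψ : Continuous ψ)
    (hψconv : ConvexOn ℝ Ξ ψ) {g : E → P → ℝ} (hg₁ : ∀ θ, Continuous fun ξ ↦ g ξ θ)
    (hg₂ : ∀ ξ, Continuous (g ξ)) (hgconv : ∀ θ ∈ Θ, ConvexOn ℝ Ξ fun ξ ↦ g ξ θ)
    {ξ₀ : E} (hξ₀ : ξ₀ ∈ Ξ) (hslater : ∀ θ ∈ Θ, g ξ₀ θ < 0) {c : ℝ}
    (h : ∀ τ : Fin d → P, (∀ k, τ k ∈ Θ) → ∃ ξ ∈ Ξ, (∀ k, g ξ (τ k) ≤ 0) ∧ ψ ξ < c) :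
    ∃ ξ ∈ Ξ, (∀ θ ∈ Θ, g ξ θ ≤ 0) ∧ ψ ξ ≤ c := by
  obtain ⟨R, hξ₀R, hwit⟩ :=
    exists_bounded_sampled_witnesses hΞ hΘ hψ hg₂ hgconv hξ₀ hslater h
  set B := Ξ ∩ Metric.closedBall 0 R
  have hB : Convex ℝ B := hΞ.inter (convex_closedBall _ _)
  have hBc : IsCompact B := (isCompact_closedBall 0 R).of_isClosed_subset
    (hΞcl.inter Metric.isClosed_closedBall) inter_subset_right
  have : Nonempty Θ := hΘne.to_subtype
  have hsampled : ∀ I : Finset Θ, I.card ≤ finrank ℝ E →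
      ({ξ ∈ B | ψ ξ ≤ c} ∩ ⋂ θ ∈ I, {ξ ∈ B | g ξ θ ≤ 0}).Nonempty := by
    intro I hI
    obtain ⟨f, hf⟩ := I.exists_fin_fun_subset_range (hI.trans hd)
    obtain ⟨ξ, hξΞ, hξR, hξg, hξc⟩ := hwit (fun k ↦ f k) fun k ↦ (f k).2
    have hξB : ξ ∈ B := ⟨hξΞ, mem_closedBall_zero_iff.2 hξR⟩
    refine ⟨ξ, ⟨hξB, hξc.le⟩, mem_iInter₂.2 fun θ hθ ↦ ?_⟩
    obtain ⟨k, rfl⟩ := hf hθ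
    exact ⟨hξB, hξg k⟩
  obtain ⟨z, ⟨⟨hzΞ, -⟩, hzc⟩, hzD⟩ := Convex.inter_iInter_nonempty_of_forall_card_le
    ((hψconv.subset inter_subset_left hB).convex_le c)
    (hBc.inter_right (isClosed_le hψ continuous_const))
    (fun θ : Θ ↦ ((hgconv θ θ.2).subset inter_subset_left hB).convex_le 0)
    (fun θ ↦ hBc.inter_right (isClosed_le (hg₁ θ) continuous_const))
    ⟨ξ₀, mem_iInter.2 fun θ ↦ ⟨⟨hξ₀, mem_closedBall_zero_iff.2 hξ₀R⟩, (hslater θ θ.2).le⟩⟩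
    hsampled
  exact ⟨z, hzΞ, fun θ hθ ↦ (mem_iInter.1 hzD ⟨θ, hθ⟩).2, hzc⟩

theorem stmt_10_general
    (ν μ : ℕ)
    (Ξ : Set (EuclideanSpace ℝ (Fin ν)))
    (hΞcl : IsClosed Ξ) (hΞconv : Convex ℝ Ξ)
    (Θ : Set (EuclideanSpace ℝ (Fin μ)))
    (hΘne : Θ.Nonempty) (hΘcpt : IsCompact Θ)
    (ψ : EuclideanSpace ℝ (Fin ν) → ℝ)
    (hψcont : Continuous ψ) (hψnonneg : ∀ ξ, 0 ≤ ψ ξ) (hψconv : ConvexOn ℝ Set.univ ψ)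
    (g : EuclideanSpace ℝ (Fin ν) → EuclideanSpace ℝ (Fin μ) → ℝ)
    (hgcont : Continuous fun p : EuclideanSpace ℝ (Fin ν) × EuclideanSpace ℝ (Fin μ) =>
      g p.1 p.2)
    (hgconv : ∀ θ ∈ Θ, ConvexOn ℝ Set.univ fun ξ => g ξ θ)
    -- Slater's condition
    (hSlater : ∃ ξhat ∈ Ξ, ∀ θ ∈ Θ, g ξhat θ < 0) :
    sInf (ψ '' {ξ ∈ Ξ | ∀ θ ∈ Θ, g ξ θ ≤ 0}) =
      sSup ((fun θs : Fin ν → EuclideanSpace ℝ (Fin μ) =>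
          sInf (ψ '' {ξ ∈ Ξ | ∀ k : Fin ν, g ξ (θs k) ≤ 0})) ''
        {θs : Fin ν → EuclideanSpace ℝ (Fin μ) | ∀ k, θs k ∈ Θ}) := by
  obtain ⟨ξ₀, hξ₀, hslater⟩ := hSlater
  have hbdd : ∀ A, BddBelow (ψ '' A) := fun A ↦ ⟨0, forall_mem_image.2 fun ξ _ ↦ hψnonneg ξ⟩
  have hsampled_le : ∀ θs : Fin ν → EuclideanSpace ℝ (Fin μ), (∀ k, θs k ∈ Θ) →
      sInf (ψ '' {ξ ∈ Ξ | ∀ k, g ξ (θs k) ≤ 0}) ≤ sInf (ψ '' {ξ ∈ Ξ | ∀ θ ∈ Θ, g ξ θ ≤ 0}) :=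
    fun θs hθs ↦ csInf_le_csInf (hbdd _)
      ⟨ψ ξ₀, mem_image_of_mem ψ ⟨hξ₀, fun θ hθ ↦ (hslater θ hθ).le⟩⟩
      (image_mono fun ξ hξ ↦ ⟨hξ.1, fun k ↦ hξ.2 _ (hθs k)⟩)
  have htuples : {θs : Fin ν → EuclideanSpace ℝ (Fin μ) | ∀ k, θs k ∈ Θ}.Nonempty :=
    ⟨fun _ ↦ hΘne.some, fun _ ↦ hΘne.some_mem⟩
  refine le_antisymm (le_of_forall_gt_imp_ge_of_dense fun c hc ↦ ?_)
    (csSup_le (htuples.image _) (forall_mem_image.2 hsampled_le))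
  have hsampled_lt : ∀ θs : Fin ν → EuclideanSpace ℝ (Fin μ), (∀ k, θs k ∈ Θ) →
      ∃ ξ ∈ Ξ, (∀ k, g ξ (θs k) ≤ 0) ∧ ψ ξ < c := by
    intro θs hθs
    have hξ₀θs : ξ₀ ∈ {ξ ∈ Ξ | ∀ k, g ξ (θs k) ≤ 0} := ⟨hξ₀, fun k ↦ (hslater _ (hθs k)).le⟩
    obtain ⟨_, ⟨ξ, hξ, rfl⟩, hξc⟩ := exists_lt_of_csInf_lt
      ⟨_, mem_image_of_mem ψ hξ₀θs⟩
      ((le_csSup ⟨_, forall_mem_image.2 hsampled_le⟩ (mem_image_of_mem _ hθs)).trans_lt hc)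
    exact ⟨ξ, hξ.1, hξ.2, hξc⟩
  obtain ⟨ξ, hξΞ, hξg, hξc⟩ := exists_feasible_le_of_forall_sampled_lt
    finrank_euclideanSpace_fin.le hΞcl hΞconv hΘne hΘcpt hψcont
    (hψconv.subset (subset_univ _) hΞconv) (fun θ ↦ hgcont.uncurry_right θ)
    (fun ξ ↦ hgcont.uncurry_left ξ) (fun θ hθ ↦ (hgconv θ hθ).subset (subset_univ _) hΞconv)
    hξ₀ hslater hsampled_lt
  exact le_trans (csInf_le (hbdd _) ⟨ξ, ⟨hξΞ, hξg⟩, rfl⟩) hξc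

theorem stmt_10
    (ν μ : ℕ) (hν : 1 ≤ ν) (hμ : 1 ≤ μ)
    (Ξ : Set (EuclideanSpace ℝ (Fin ν)))
    (hΞne : Ξ.Nonempty) (hΞcl : IsClosed Ξ) (hΞconv : Convex ℝ Ξ)
    (Θ : Set (EuclideanSpace ℝ (Fin μ)))
    (hΘne : Θ.Nonempty) (hΘcpt : IsCompact Θ)
    (ψ : EuclideanSpace ℝ (Fin ν) → ℝ)
    (hψcont : Continuous ψ) (hψnonneg : ∀ ξ, 0 ≤ ψ ξ) (hψconv : ConvexOn ℝ Set.univ ψ)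
    (g : EuclideanSpace ℝ (Fin ν) → EuclideanSpace ℝ (Fin μ) → ℝ)
    (hgcont : Continuous fun p : EuclideanSpace ℝ (Fin ν) × EuclideanSpace ℝ (Fin μ) =>
      g p.1 p.2)
    (hgconv : ∀ θ ∈ Θ, ConvexOn ℝ Set.univ fun ξ => g ξ θ)
    -- Slater's condition
    (hSlater : ∃ ξhat ∈ Ξ, ∀ θ ∈ Θ, g ξhat θ < 0) :
    sInf (ψ '' {ξ ∈ Ξ | ∀ θ ∈ Θ, g ξ θ ≤ 0}) =
      sSup ((fun θs : Fin ν → EuclideanSpace ℝ (Fin μ) =>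
          sInf (ψ '' {ξ ∈ Ξ | ∀ k : Fin ν, g ξ (θs k) ≤ 0})) ''
        {θs : Fin ν → EuclideanSpace ℝ (Fin μ) | ∀ k, θs k ∈ Θ}) :=
  stmt_10_general ν μ Ξ hΞcl hΞconv Θ hΘne hΘcpt ψ hψcont hψnonneg hψconv g hgcont hgconv hSlater
end
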